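/- arXiv:1211.0052 — 4 statements merged into one kernel-verified Lean document; each statement's English description precedes it below -/
import Mathlib

section
/- Let e ∈ 𝓔, p > d, n ∈ ℕ, and ρ_{n,p}(z) = (1+2^n|z|)^{−p} on ℝ^d. Then there is a constant C_p depending only on p and d such that ‖ρ_{n,p}‖_{(e)} ≤ 1/e^{-1}(2^{nd}/C_p). In particular, for p = d+1 there is a constant C depending on d and on the doubling constant of e such that ‖ρ_{n,d+1}‖_{(e)} ≤ C/e^{-1}(2^{nd}) = C · 2^{−nd} β_e(2^{nd}). -/
open MeasureTheory ENNReal Filter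

noncomputable section

/-- Euclidean space `ℝ^d`. -/
abbrev Vec (d : ℕ) := EuclideanSpace ℝ (Fin d)

variable {d : ℕ}

/-- The class `𝓔` of Young functions: symmetric, strictly convex, nonnegative, vanishing at `0`,
satisfying the `Δ₂` (doubling) condition, and with `s ↦ e s / s` nondecreasing. -/
structure IsYoungE (e : ℝ → ℝ) : Prop where
  symm : ∀ s, e (-s) = e s
  nonneg : ∀ s, 0 ≤ e s
  zero : e 0 = 0
  strictConvexOn : StrictConvexOn ℝ Set.univ e
  delta2 : ∃ lam > 0, ∀ s, e (2 * s) ≤ lam * e s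
  ratio_mono : ∀ s t : ℝ, 0 < s → s ≤ t → e s / s ≤ e t / t

/-- Luxemburg norm `‖f‖_(e) = inf {c > 0 : ∫ e (f x / c) dx ≤ 1}` (with value `∞` if no such `c`). -/
def luxNorm (e : ℝ → ℝ) (f : Vec d → ℝ) : ℝ≥0∞ :=
  sInf {c : ℝ≥0∞ | 0 < c ∧ c ≠ ∞ ∧ ∫ x, e (f x / c.toReal) ≤ 1}

/-- `e⁻¹ a = sup {c : e c ≤ a}`. -/
def einv (e : ℝ → ℝ) (a : ℝ) : ℝ := sSup {c : ℝ | e c ≤ a}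

/-- `β_e R = R / e⁻¹ R`. -/
def betaE (e : ℝ → ℝ) (R : ℝ) : ℝ := R / einv e R

/-- Conjugate (Legendre transform) Young function `e_*`. -/
def econj (e : ℝ → ℝ) (s : ℝ) : ℝ := sSup {r : ℝ | ∃ t : ℝ, r = s * t - e t}

/-- Partial derivative in the `i`-th coordinate direction. -/
def pd (i : Fin d) (f : Vec d → ℝ) : Vec d → ℝ :=
  fun x => fderiv ℝ f x (EuclideanSpace.single i 1)

/-- Multi-index partial derivative `∂_α`. -/
def mderiv (α : Fin d → ℕ) (f : Vec d → ℝ) : Vec d → ℝ :=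
  (List.finRange d).foldl (fun g i => (pd i)^[α i] g) f

/-- Length `|α|` of a multi-index. -/
def mOrder (α : Fin d → ℕ) : ℕ := ∑ i, α i

/-- `‖φ‖_{k,∞} = Σ_{|α| ≤ k} ‖∂_α φ‖_∞` (as an extended real). -/
def supNorm (k : ℕ) (φ : Vec d → ℝ) : ℝ≥0∞ :=
  ∑' α : {α : Fin d → ℕ // mOrder α ≤ k}, ⨆ x : Vec d, ENNReal.ofReal |mderiv α.1 φ x|

/-- Weighted Orlicz–Sobolev norm `‖f‖_{k,l,(e)} = Σ_{|γ|≤l} Σ_{|α|≤k} ‖x^γ ∂_α f‖_(e)`. -/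
def wnorm (e : ℝ → ℝ) (k l : ℕ) (f : Vec d → ℝ) : ℝ≥0∞ :=
  ∑' γ : {γ : Fin d → ℕ // mOrder γ ≤ l}, ∑' α : {α : Fin d → ℕ // mOrder α ≤ k},
    luxNorm e (fun x => (∏ i, x i ^ γ.1 i) * mderiv α.1 f x)

/-- Integral of `φ` against a finite signed measure, via the Jordan decomposition. -/
def sInt (μ : SignedMeasure (Vec d)) (φ : Vec d → ℝ) : ℝ :=
  ∫ x, φ x ∂μ.toJordanDecomposition.posPart - ∫ x, φ x ∂μ.toJordanDecomposition.negPart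

/-- The distance `d_k(μ,ν) = sup {|∫φdμ − ∫φdν| : φ ∈ C^∞, ‖φ‖_{k,∞} ≤ 1}`. -/
def dk (k : ℕ) (μ ν : SignedMeasure (Vec d)) : ℝ :=
  sSup {r : ℝ | ∃ φ : Vec d → ℝ, ContDiff ℝ (⊤ : ℕ∞) φ ∧ supNorm k φ ≤ 1 ∧
    r = |sInt μ φ - sInt ν φ|}

/-- `μ ∈ 𝓜_a` with density `p` (absolute continuity w.r.t. Lebesgue measure). -/
def HasDensity (μ : SignedMeasure (Vec d)) (p : Vec d → ℝ) : Prop :=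
  Integrable p volume ∧ ∀ s : Set (Vec d), MeasurableSet s → μ s = ∫ x in s, p x

/-- `π_{q,k,m,e}(μ,(μ_n)_n)` where `p n` is the density of `ν n`. -/
def piApprox (e : ℝ → ℝ) (q k m : ℕ) (μ : SignedMeasure (Vec d))
    (ν : ℕ → SignedMeasure (Vec d)) (p : ℕ → Vec d → ℝ) : ℝ≥0∞ :=
  (∑' n : ℕ, (2 : ℝ≥0∞) ^ (n * (q + k)) * ENNReal.ofReal (betaE e ((2:ℝ) ^ (n * d))) *
      ENNReal.ofReal (dk k μ (ν n)))
  + ∑' n : ℕ, ((2 : ℝ≥0∞) ^ (2 * n * m))⁻¹ * wnorm e (2 * m + q) (2 * m) (p n)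

/-- `ρ_{q,k,m,e}(μ)`: infimum of `π_{q,k,m,e}(μ,(μ_n)_n)` over sequences of absolutely
continuous measures. -/
def rho (e : ℝ → ℝ) (q k m : ℕ) (μ : SignedMeasure (Vec d)) : ℝ≥0∞ :=
  ⨅ (ν : ℕ → SignedMeasure (Vec d)) (p : ℕ → Vec d → ℝ) (_ : ∀ n, HasDensity (ν n) (p n)),
    piApprox e q k m μ ν p

/-- `g` is the `α`-th distributional (weak) derivative of `f`. -/
def HasWeakDeriv (α : Fin d → ℕ) (f g : Vec d → ℝ) : Prop :=
  ∀ φ : Vec d → ℝ, ContDiff ℝ (⊤ : ℕ∞) φ → HasCompactSupport φ →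
    ∫ x, mderiv α φ x * f x = (-1 : ℝ) ^ mOrder α * ∫ x, φ x * g x

/-- `L_a(R) = R (ln R)^a`. -/
def La (a R : ℝ) : ℝ := R * Real.log R ^ a

/-- The set `M_{m,q,e}(R)` of absolutely continuous measures with `‖p_μ‖_{2m+q,2m,(e)} ≤ R`. -/
def Mset (e : ℝ → ℝ) (m q : ℕ) (R : ℝ) : Set (SignedMeasure (Vec d)) :=
  {ν | ∃ p : Vec d → ℝ, HasDensity ν p ∧ wnorm e (2 * m + q) (2 * m) p ≤ ENNReal.ofReal R}

/-- `d_k(μ, A) = inf_{ν ∈ A} d_k(μ,ν)`. -/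
def dkSet (k : ℕ) (μ : SignedMeasure (Vec d)) (A : Set (SignedMeasure (Vec d))) : ℝ :=
  sInf {r : ℝ | ∃ ν ∈ A, r = dk k μ ν}

/-- Hypothesis `H_q(k,m,e)` for `μ`. -/
def Hq (e : ℝ → ℝ) (q k m : ℕ) (μ : SignedMeasure (Vec d)) : Prop :=
  ∃ a : ℝ, 1 < a ∧ ∃ Cb : ℝ, ∀ᶠ R in atTop,
    La a R ^ (1 + ((k : ℝ) + q) / (2 * m)) * betaE e (La a R ^ ((d : ℝ) / (2 * m))) / R *
      dkSet k μ (Mset e m q R) ≤ Cb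

/-- `e ∈ 𝓔_{a,c}` : `0 < liminf β_e(R)/(R^a (ln R)^c) ≤ limsup β_e(R)/(R^a (ln R)^c) < ∞`. -/
def MemEclass (e : ℝ → ℝ) (a c : ℝ) : Prop :=
  ∃ c₁ c₂ : ℝ, 0 < c₁ ∧ ∀ᶠ R in atTop,
    c₁ * (R ^ a * Real.log R ^ c) ≤ betaE e R ∧ betaE e R ≤ c₂ * (R ^ a * Real.log R ^ c)

/-- Weak derivative with respect to a (positive) measure `μ`:
`∫ ∂_α f · g dμ = (−1)^{|α|} ∫ f · h dμ` for test functions `f`. -/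
def WeakDerivMu (μ : Measure (Vec d)) (α : Fin d → ℕ) (g h : Vec d → ℝ) : Prop :=
  ∀ f : Vec d → ℝ, ContDiff ℝ (⊤ : ℕ∞) f → HasCompactSupport f →
    ∫ x, mderiv α f x * g x ∂μ = (-1 : ℝ) ^ mOrder α * ∫ x, f x * h x ∂μ

/-- The Sobolev norm `‖1‖_{W^{m,p}_μ}` (infimum over admissible families of weak derivatives;
`∞` if `1 ∉ W^{m,p}_μ`). -/
def muSobNorm (μ : Measure (Vec d)) (m : ℕ) (p : ℝ≥0∞) : ℝ≥0∞ :=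
  ⨅ (h : (Fin d → ℕ) → Vec d → ℝ)
    (_ : ∀ α : Fin d → ℕ, 1 ≤ mOrder α → mOrder α ≤ m →
      WeakDerivMu μ α (fun _ => 1) (h α)),
    (eLpNorm (fun _ : Vec d => (1 : ℝ)) p μ +
      ∑' α : {α : Fin d → ℕ // 1 ≤ mOrder α ∧ mOrder α ≤ m}, eLpNorm (h α.1) p μ)

/-- `c_{m,p}(μ) = ‖1‖_{W^{1,p}_μ}^{k_{d,p}} ‖1‖_{W^{m,p}_μ}` with `k_{d,p} = (d−1)/(1−d/p)`. -/
def cMP (μ : Measure (Vec d)) (m : ℕ) (p : ℝ) : ℝ≥0∞ :=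
  muSobNorm μ 1 (ENNReal.ofReal p) ^ (((d : ℝ) - 1) / (1 - d / p)) *
    muSobNorm μ m (ENNReal.ofReal p)

/-- Moment `m_k(μ) = ∫ (1+|x|)^k dμ`. -/
def mMoment (k : ℕ) (μ : Measure (Vec d)) : ℝ≥0∞ :=
  ∫⁻ x, ENNReal.ofReal ((1 + ‖x‖) ^ k) ∂μ

/-- The set `M̃_{m,q,e}(R)`. -/
def MsetT (d' m q : ℕ) (R : ℝ) : Set (SignedMeasure (Vec d')) :=
  {ν | ∃ (κ : Measure (Vec d')) (_ : IsFiniteMeasure κ), ν = κ.toSignedMeasure ∧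
    (∃ p, HasDensity ν p) ∧
    cMP κ (2 * m + q) (2 * (d' + 1)) * mMoment (2 * (d' + 1 + m)) κ ^ ((1 : ℝ)/2) ≤
      ENNReal.ofReal R}

/-- Hypothesis `H̃_q(k,m,e)`. -/
def HqT (e : ℝ → ℝ) (q k m : ℕ) (μ : SignedMeasure (Vec d)) : Prop :=
  ∃ a : ℝ, 1 < a ∧ ∃ Cb : ℝ, ∀ᶠ R in atTop,
    La a R ^ (1 + ((k : ℝ) + q) / (2 * m)) * betaE e (La a R ^ ((d : ℝ) / (2 * m))) / R *
      dkSet k μ (MsetT d m q R) ≤ Cb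

/-! Hermite functions -/

/-- Physicists' Hermite polynomial `H_n(t) = (−1)^n e^{t²} (d/dt)^n e^{−t²}` (as a function). -/
def physHermite (n : ℕ) : ℝ → ℝ :=
  fun t => (-1 : ℝ) ^ n * Real.exp (t ^ 2) * deriv^[n] (fun s => Real.exp (-s ^ 2)) t

/-- `L²`-normalized Hermite functions `h_n`. -/
def hermiteFun (n : ℕ) : ℝ → ℝ :=
  fun t => ((2:ℝ) ^ n * n.factorial * Real.sqrt Real.pi) ^ (-(1:ℝ)/2) * physHermite n t *
    Real.exp (-t ^ 2 / 2)

/-- `d`-dimensional Hermite function `𝓗_α`. -/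
def hermd (α : Fin d → ℕ) (x : Vec d) : ℝ := ∏ i, hermiteFun (α i) (x i)

/-- Kernel `𝓗_n(x,y) = Σ_{|α| = n} 𝓗_α(x) 𝓗_α(y)`. -/
def hermKer (d' n : ℕ) (x y : Vec d') : ℝ :=
  ∑' α : {α : Fin d' → ℕ // mOrder α = n}, hermd α.1 x * hermd α.1 y

/-- Kernel `𝓗_n^a(x,y) = Σ_{j=0}^∞ a(j/4^n) 𝓗_j(x,y)`. -/
def hermKerA (a : ℝ → ℝ) (d' n : ℕ) (x y : Vec d') : ℝ :=
  ∑' j : ℕ, a (j / 4 ^ n) * hermKer d' j x y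

/-- Kernel convolution `(Φ * f)(x) = ∫ Φ(x,y) f(y) dy`. -/
def kconv (Φ : Vec d → Vec d → ℝ) (f : Vec d → ℝ) (x : Vec d) : ℝ :=
  ∫ y, Φ x y * f y

/-- `‖a‖_l = Σ_{i=0}^l sup_{t ≥ 0} |a^{(i)}(t)|`. -/
def aNorm (l : ℕ) (a : ℝ → ℝ) : ℝ :=
  ∑ i ∈ Finset.range (l + 1), ⨆ t : Set.Ici (0:ℝ), |iteratedDeriv i a t|

/-- `d_k` written directly for densities: between `μ_f(dx) = f(x)dx` and `μ_g(dx) = g(x)dx`. -/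
def dkFun (k : ℕ) (f g : Vec d → ℝ) : ℝ :=
  sSup {r : ℝ | ∃ φ : Vec d → ℝ, ContDiff ℝ (⊤ : ℕ∞) φ ∧ supNorm k φ ≤ 1 ∧
    r = |∫ x, φ x * (f x - g x)|}

/-- `d_{k,e_*}` written directly for densities. -/
def dkEFun (e : ℝ → ℝ) (k : ℕ) (f g : Vec d → ℝ) : ℝ :=
  sSup {r : ℝ | ∃ φ : Vec d → ℝ,
    (∑' α : {α : Fin d → ℕ // mOrder α ≤ k}, luxNorm (econj e) (mderiv α.1 φ)) ≠ ∞ ∧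
    luxNorm (econj e) φ ≤ 1 ∧ r = |∫ x, φ x * (f x - g x)|}

end

noncomputable section

variable {d : ℕ}

/-- Dual distance `‖μ̃ − f̃‖_{W_*^{k,∞}}` between a signed measure and a function
(both regarded as elements of `Y = W_*^{k,∞}`). -/
def YdistM (k : ℕ) (μ : SignedMeasure (Vec d)) (f : Vec d → ℝ) : ℝ :=
  sSup {r : ℝ | ∃ φ : Vec d → ℝ, ContDiff ℝ (⊤ : ℕ∞) φ ∧ supNorm k φ ≤ 1 ∧
    r = |sInt μ φ - ∫ x, φ x * f x|}

/-- Membership of `μ̃` in `S_{θ,m,aa}(X,Y)` for `X = W^{2m+q,2m,e}`, `Y = W_*^{k,∞}`. -/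
def memS (e : ℝ → ℝ) (q k m : ℕ) (θ aa : ℝ) (μ : SignedMeasure (Vec d)) : Prop :=
  ∃ F : ℕ → Vec d → ℝ,
    (∑' n : ℕ,
      (ENNReal.ofReal ((2:ℝ) ^ (((n:ℝ) + 1) * θ) * ((n:ℝ) + 1) ^ aa) *
          ENNReal.ofReal (YdistM k μ (F (n+1)))
        + ((2:ℝ≥0∞) ^ (2 * (n+1) * m))⁻¹ * wnorm e (2*m+q) (2*m) (F (n+1)))) ≠ ∞

/-- `K(μ̃, t)` for `X = W^{2m+q,2m,e}`, `Y = W_*^{k,∞}`. -/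
def KfnM (e : ℝ → ℝ) (q k m : ℕ) (μ : SignedMeasure (Vec d)) (t : ℝ) : ℝ≥0∞ :=
  ⨅ f : Vec d → ℝ, ENNReal.ofReal (YdistM k μ f) + ENNReal.ofReal t * wnorm e (2*m+q) (2*m) f

/-- Membership of `μ̃` in `K_{ρ,b}(X,Y)`. -/
def memK (e : ℝ → ℝ) (q k m : ℕ) (r b : ℝ) (μ : SignedMeasure (Vec d)) : Prop :=
  (∫⁻ t in Set.Ioo (0:ℝ) 1,
    ENNReal.ofReal (t ^ (-r - 1) * |Real.log t| ^ b) * KfnM e q k m μ t) ≠ ∞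

/-- Membership of `μ̃` in `B_{u,v}(X,Y)`. -/
def memB (e : ℝ → ℝ) (q k m : ℕ) (u v : ℝ) (μ : SignedMeasure (Vec d)) : Prop :=
  ∃ Cb : ℝ, ∀ᶠ R in atTop,
    R ^ u * Real.log R ^ v *
      sInf {r : ℝ | ∃ f : Vec d → ℝ, wnorm e (2*m+q) (2*m) f ≤ ENNReal.ofReal R ∧
        r = YdistM k μ f} ≤ Cb

/-- The Sobolev norm `Σ_{|α|≤k} ‖∂_α φ‖_{L^p}` of a test function. -/
def sobPNorm (k : ℕ) (p : ℝ) (φ : Vec d → ℝ) : ℝ≥0∞ :=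
  ∑' α : {α : Fin d → ℕ // mOrder α ≤ k}, eLpNorm (mderiv α.1 φ) (ENNReal.ofReal p) volume

/-- The weighted Sobolev norm `‖f‖_{k,l,p} = Σ_{|γ|≤l} Σ_{|α|≤k} ‖x^γ ∂_α f‖_{L^p}`. -/
def wnormP (p : ℝ) (k l : ℕ) (f : Vec d → ℝ) : ℝ≥0∞ :=
  ∑' γ : {γ : Fin d → ℕ // mOrder γ ≤ l}, ∑' α : {α : Fin d → ℕ // mOrder α ≤ k},
    eLpNorm (fun x => (∏ i, x i ^ γ.1 i) * mderiv α.1 f x) (ENNReal.ofReal p) volume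

/-- Dual distance in `Y = W^{−k,p_*} = (W^{k,p_*})^*` between a functional `u` and (the
functional associated with) a function `f`. -/
def YdistD (k : ℕ) (ps : ℝ) (u : (Vec d → ℝ) → ℝ) (f : Vec d → ℝ) : ℝ :=
  sSup {r : ℝ | ∃ φ : Vec d → ℝ, ContDiff ℝ (⊤ : ℕ∞) φ ∧ HasCompactSupport φ ∧
    sobPNorm k ps φ ≤ 1 ∧ r = |u φ - ∫ x, φ x * f x|}

/-- `K(u,t)` for `X = W^{2m+q,2m,p}`, `Y = W^{−k,p_*}`. -/
def KfnD (p ps : ℝ) (q k m : ℕ) (u : (Vec d → ℝ) → ℝ) (t : ℝ) : ℝ≥0∞ :=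
  ⨅ f : Vec d → ℝ,
    ENNReal.ofReal (YdistD k ps u f) + ENNReal.ofReal t * wnormP p (2*m+q) (2*m) f

/-- Membership of `u` in the interpolation space `(W^{2m+q,2m,p}, W^{−k,p_*})_γ`. -/
def memInterpD (p ps ga : ℝ) (q k m : ℕ) (u : (Vec d → ℝ) → ℝ) : Prop :=
  (∫⁻ t in Set.Ioi (0:ℝ), ENNReal.ofReal (t ^ (-ga - 1)) * KfnD p ps q k m u t) ≠ ∞

/-- Dual distance in `Y = W_*^{k,∞}` between a functional `u` and a function `f`. -/
def YdistU (k : ℕ) (u : (Vec d → ℝ) → ℝ) (f : Vec d → ℝ) : ℝ :=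
  sSup {r : ℝ | ∃ φ : Vec d → ℝ, ContDiff ℝ (⊤ : ℕ∞) φ ∧ supNorm k φ ≤ 1 ∧
    r = |u φ - ∫ x, φ x * f x|}

/-- Membership of `u` in `B_{θ,β}(W^{n,l,e}, W_*^{k,∞})`. -/
def memBU (e : ℝ → ℝ) (n l k : ℕ) (θ β : ℝ) (u : (Vec d → ℝ) → ℝ) : Prop :=
  ∃ Cb : ℝ, ∀ᶠ R in atTop,
    R ^ θ * Real.log R ^ β *
      sInf {r : ℝ | ∃ f : Vec d → ℝ, wnorm e n l f ≤ ENNReal.ofReal R ∧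
        r = YdistU k u f} ≤ Cb

/-- `K(u,t)` for `X = W^{n,l,e}`, `Y = W_*^{k,∞}`. -/
def KfnU (e : ℝ → ℝ) (n l k : ℕ) (u : (Vec d → ℝ) → ℝ) (t : ℝ) : ℝ≥0∞ :=
  ⨅ f : Vec d → ℝ, ENNReal.ofReal (YdistU k u f) + ENNReal.ofReal t * wnorm e n l f

/-- Membership of `u` in the interpolation space `(W^{n,l,e}, W_*^{k,∞})_γ`. -/
def memInterpU (e : ℝ → ℝ) (n l k : ℕ) (ga : ℝ) (u : (Vec d → ℝ) → ℝ) : Prop :=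
  (∫⁻ t in Set.Ioi (0:ℝ), ENNReal.ofReal (t ^ (-ga - 1)) * KfnU e n l k u t) ≠ ∞

/-- Super kernel: nonnegative, supported in the unit ball, integral one, all nontrivial
moments vanish. -/
structure IsSuperKernel (d' : ℕ) (φ : Vec d' → ℝ) : Prop where
  nonneg : ∀ x, 0 ≤ φ x
  supp : ∀ x, φ x ≠ 0 → ‖x‖ ≤ 1
  total : (∫ x, φ x) = 1
  moments : ∀ α : Fin d' → ℕ, α ≠ 0 → (∫ x, (∏ i, x i ^ α i) * φ x) = 0

/-- `φ_δ(y) = δ^{−d} φ(y/δ)`. -/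
def dilK (φ : Vec d → ℝ) (δ : ℝ) (y : Vec d) : ℝ := φ (δ⁻¹ • y) / δ ^ d

/-- Convolution of functions `(f * g)(x) = ∫ f(y) g(x−y) dy`. -/
def convF (f g : Vec d → ℝ) (x : Vec d) : ℝ := ∫ y, f y * g (x - y)

end

noncomputable section Abstract

variable {X Y : Type*} [NormedAddCommGroup X] [NormedAddCommGroup Y]

/-- `K(y,t) = inf_{x ∈ X} (‖y − Jx‖_Y + t‖x‖_X)` for a continuous embedding `J : X → Y`. -/
def Kab (J : X → Y) (y : Y) (t : ℝ) : ℝ≥0∞ :=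
  ⨅ x : X, ENNReal.ofReal ‖y - J x‖ + ENNReal.ofReal t * ENNReal.ofReal ‖x‖

/-- `|y|_{γ,b} = ∫₀¹ t^{−γ} |ln t|^b K(y,t) dt/t`. -/
def normGB (J : X → Y) (ga b : ℝ) (y : Y) : ℝ≥0∞ :=
  ∫⁻ t in Set.Ioo (0:ℝ) 1, ENNReal.ofReal (t ^ (-ga - 1) * |Real.log t| ^ b) * Kab J y t

/-- `π_{θ,m,a}(y,(x_n)_n) = Σ_{n=1}^∞ [2^{nθ} n^a ‖y−x_n‖_Y + 2^{−2nm} ‖x_n‖_X]`. -/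
def piAb (J : X → Y) (θ aa : ℝ) (m : ℕ) (y : Y) (x : ℕ → X) : ℝ≥0∞ :=
  ∑' n : ℕ,
    (ENNReal.ofReal ((2:ℝ) ^ (((n:ℝ) + 1) * θ) * ((n:ℝ) + 1) ^ aa) *
        ENNReal.ofReal ‖y - J (x (n+1))‖
      + ((2:ℝ≥0∞) ^ (2 * (n+1) * m))⁻¹ * ENNReal.ofReal ‖x (n+1)‖)

/-- `ρ^{X,Y}_{θ,m,a}(y)`. -/
def rhoAb (J : X → Y) (θ aa : ℝ) (m : ℕ) (y : Y) : ℝ≥0∞ :=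
  ⨅ x : ℕ → X, piAb J θ aa m y x

/-- `d_Y(y, B_X(R))`. -/
def dYball (J : X → Y) (y : Y) (R : ℝ) : ℝ :=
  sInf {r : ℝ | ∃ x : X, ‖x‖ ≤ R ∧ r = ‖y - J x‖}

end Abstract

noncomputable section Stmt6Helpers

open MeasureTheory

variable {e : ℝ → ℝ}

lemma youngE_one_pos (he : IsYoungE e) : 0 < e 1 := by
  by_contra h
  push_neg at h
  have h1 : e 1 = 0 := le_antisymm h (he.nonneg 1)
  have h2 := he.strictConvexOn.2 (Set.mem_univ (0:ℝ)) (Set.mem_univ (1:ℝ)) (by norm_num)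
    (by norm_num : (0:ℝ) < 1/2) (by norm_num : (0:ℝ) < 1/2) (by norm_num : (1:ℝ)/2 + 1/2 = 1)
  simp only [smul_eq_mul, mul_zero, mul_one, zero_add, he.zero, h1] at h2
  exact absurd h2 (not_lt.2 (by simpa using he.nonneg ((1:ℝ)/2 * 0 + 1/2 * 1)))

lemma youngE_mono (he : IsYoungE e) {s t : ℝ} (hs : 0 ≤ s) (hst : s ≤ t) : e s ≤ e t := by
  rcases eq_or_lt_of_le hs with h | h
  · rw [← h, he.zero]; exact he.nonneg t
  · have ht : (0:ℝ) < t := lt_of_lt_of_le h hst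
    have hr := he.ratio_mono s t h hst
    calc e s = (e s / s) * s := by field_simp
    _ ≤ (e t / t) * s := mul_le_mul_of_nonneg_right hr hs
    _ ≤ (e t / t) * t := mul_le_mul_of_nonneg_left hst (div_nonneg (he.nonneg t) ht.le)
    _ = e t := by field_simp

lemma youngE_bddAbove (he : IsYoungE e) (a : ℝ) : BddAbove {c : ℝ | e c ≤ a} := by
  refine ⟨max 1 (a / e 1), fun c hc => ?_⟩
  simp only [Set.mem_setOf_eq] at hc
  rcases le_or_gt c 1 with h | h
  · exact le_max_of_le_left h
  · have h1 : 0 < e 1 := youngE_one_pos he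
    have hc0 : (0:ℝ) < c := lt_trans one_pos h
    have hr := he.ratio_mono 1 c one_pos h.le
    rw [div_one] at hr
    have hc' : e 1 * c ≤ e c := (le_div_iff₀ hc0).1 hr
    refine le_max_of_le_right ?_
    rw [le_div_iff₀ h1]
    calc c * e 1 = e 1 * c := mul_comm _ _
    _ ≤ e c := hc'
    _ ≤ a := hc

lemma einv_pos (he : IsYoungE e) {a : ℝ} (ha : 0 < a) : 0 < einv e a := by
  have h1 : 0 < e 1 := youngE_one_pos he
  set s := min 1 (a / e 1) with hs
  have hs0 : 0 < s := lt_min one_pos (by positivity)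
  have hes : e s ≤ a := by
    have hr := he.ratio_mono s 1 hs0 (min_le_left _ _)
    rw [div_one] at hr
    have : e s ≤ e 1 * s := by
      calc e s = (e s / s) * s := by field_simp
      _ ≤ e 1 * s := mul_le_mul_of_nonneg_right hr hs0.le
    calc e s ≤ e 1 * s := this
    _ ≤ e 1 * (a / e 1) := mul_le_mul_of_nonneg_left (min_le_right _ _) h1.le
    _ = a := by field_simp
  exact lt_of_lt_of_le hs0 (le_csSup (youngE_bddAbove he a) hes)

lemma e_le_of_lt_einv (he : IsYoungE e) {a c : ℝ} (ha : 0 ≤ a) (hc : 0 ≤ c)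
    (h : c < einv e a) : e c ≤ a := by
  obtain ⟨s, hs, hcs⟩ := exists_lt_of_lt_csSup ⟨0, by simp [he.zero, ha]⟩ h
  exact le_trans (youngE_mono he hc hcs.le) hs

lemma einv_mono (he : IsYoungE e) {a b : ℝ} (ha : 0 ≤ a) (hab : a ≤ b) :
    einv e a ≤ einv e b :=
  csSup_le_csSup (youngE_bddAbove he b) ⟨0, by simp [he.zero, ha]⟩
    (fun _ hc => le_trans hc hab)

lemma einv_scale (he : IsYoungE e) {a : ℝ} (ha : 0 < a) (k : ℕ) :
    einv e a ≤ 2 ^ k * einv e (a / 2 ^ k) := by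
  have ha2 : (0:ℝ) < a / 2 ^ k := by positivity
  have hkpos : (0:ℝ) < 2 ^ k := by positivity
  have hEpos : 0 < einv e (a / 2 ^ k) := einv_pos he ha2
  refine csSup_le ⟨0, by simp [he.zero, ha.le]⟩ (fun s hs => ?_)
  rcases le_or_gt s 0 with h | h
  · nlinarith
  · have hmem : e (s / 2 ^ k) ≤ a / 2 ^ k := by
      have hdiv : s / 2 ^ k ≤ s := by
        rw [div_le_iff₀ hkpos]
        have h2k : (1:ℝ) ≤ 2 ^ k := by
          calc (1:ℝ) = 1 ^ k := (one_pow k).symm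
          _ ≤ 2 ^ k := by gcongr <;> norm_num
        nlinarith
      have hr := he.ratio_mono (s / 2 ^ k) s (by positivity) hdiv
      have h1 : e (s / 2 ^ k) ≤ e s / 2 ^ k := by
        calc e (s / 2 ^ k) = (e (s / 2 ^ k) / (s / 2 ^ k)) * (s / 2 ^ k) := by field_simp
        _ ≤ (e s / s) * (s / 2 ^ k) := mul_le_mul_of_nonneg_right hr (by positivity)
        _ = e s / 2 ^ k := by field_simp
      calc e (s / 2 ^ k) ≤ e s / 2 ^ k := h1
      _ ≤ a / 2 ^ k := by gcongr; exact hs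
    have hle : s / 2 ^ k ≤ einv e (a / 2 ^ k) := le_csSup (youngE_bddAbove he _) hmem
    calc s = 2 ^ k * (s / 2 ^ k) := by field_simp
    _ ≤ 2 ^ k * einv e (a / 2 ^ k) := mul_le_mul_of_nonneg_left hle hkpos.le

lemma Cp_pos (d : ℕ) {p : ℝ} (hp : (d:ℝ) < p) :
    0 < ∫ y : Vec d, (1 + ‖y‖) ^ (-p) := by
  have hfr : ((Module.finrank ℝ (Vec d) : ℝ)) < p := by
    rwa [finrank_euclideanSpace_fin]
  have hint : Integrable (fun y : Vec d => (1 + ‖y‖) ^ (-p)) := integrable_one_add_norm hfr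
  rw [integral_pos_iff_support_of_nonneg (fun y => Real.rpow_nonneg (by positivity) _) hint]
  have hsupp : Function.support (fun y : Vec d => (1 + ‖y‖) ^ (-p)) = Set.univ := by
    ext y
    simp only [Function.mem_support, Set.mem_univ, iff_true]
    exact ne_of_gt (Real.rpow_pos_of_pos (by positivity) _)
  rw [hsupp]
  calc (0:ℝ≥0∞) < volume (Metric.ball (0 : Vec d) 1) := Metric.measure_ball_pos volume 0 one_pos
  _ ≤ volume (Set.univ : Set (Vec d)) := measure_mono (Set.subset_univ _)

lemma lux_le (d : ℕ) {p : ℝ} (hp : (d:ℝ) < p) (he : IsYoungE e) (n : ℕ) :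
    luxNorm e (fun z : Vec d => (1 + 2 ^ n * ‖z‖) ^ (-p)) ≤
      ENNReal.ofReal (1 / einv e ((2:ℝ) ^ (n * d) / ∫ y : Vec d, (1 + ‖y‖) ^ (-p))) := by
  set Cp := ∫ y : Vec d, (1 + ‖y‖) ^ (-p) with hCpdef
  have hCp : 0 < Cp := Cp_pos d hp
  have hfr : ((Module.finrank ℝ (Vec d) : ℝ)) < p := by
    rwa [finrank_euclideanSpace_fin]
  have hgint : Integrable (fun y : Vec d => (1 + ‖y‖) ^ (-p)) := integrable_one_add_norm hfr
  have hR : (0:ℝ) < (2:ℝ) ^ (n * d) / Cp := by positivity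
  have hE : 0 < einv e ((2:ℝ) ^ (n * d) / Cp) := einv_pos he hR
  set t := 1 / einv e ((2:ℝ) ^ (n * d) / Cp) with htdef
  have ht : 0 < t := by positivity
  -- basic facts about ρ
  have hsmul : ∀ z : Vec d, (1 + 2 ^ n * ‖z‖ : ℝ) ^ (-p) =
      (fun y : Vec d => (1 + ‖y‖) ^ (-p)) ((2 ^ n : ℝ) • z) := by
    intro z
    simp only [norm_smul, Real.norm_eq_abs]
    rw [abs_of_pos (by positivity : (0:ℝ) < 2 ^ n)]
  have hrho_int : Integrable (fun z : Vec d => (1 + 2 ^ n * ‖z‖ : ℝ) ^ (-p)) := by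
    have := hgint.comp_smul (R := (2 ^ n : ℝ)) (by positivity : (2 ^ n : ℝ) ≠ 0)
    refine this.congr (Filter.Eventually.of_forall fun z => ?_)
    exact (hsmul z).symm
  have hcv : ∫ z : Vec d, (1 + 2 ^ n * ‖z‖ : ℝ) ^ (-p) = ((2:ℝ) ^ (n * d))⁻¹ * Cp := by
    calc ∫ z : Vec d, (1 + 2 ^ n * ‖z‖ : ℝ) ^ (-p)
        = ∫ z : Vec d, (fun y : Vec d => (1 + ‖y‖) ^ (-p)) ((2 ^ n : ℝ) • z) := by
          exact integral_congr_ae (Filter.Eventually.of_forall hsmul)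
    _ = (((2:ℝ) ^ n) ^ Module.finrank ℝ (Vec d))⁻¹ • Cp :=
          Measure.integral_comp_smul_of_nonneg volume (fun y : Vec d => (1 + ‖y‖) ^ (-p))
            ((2:ℝ) ^ n) (hR := by positivity)
    _ = ((2:ℝ) ^ (n * d))⁻¹ * Cp := by
          rw [finrank_euclideanSpace_fin, ← pow_mul, smul_eq_mul]
  -- main estimate: for every admissible c, the Luxemburg condition holds
  have hmain : ∀ c : ℝ, t < c →
      ∫ z : Vec d, e ((1 + 2 ^ n * ‖z‖ : ℝ) ^ (-p) / c) ≤ 1 := by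
    intro c hcgt
    have hc0 : 0 < c := lt_trans ht hcgt
    have h1cE : 1 / c < einv e ((2:ℝ) ^ (n * d) / Cp) := by
      rw [div_lt_iff₀ hc0]
      rw [htdef, div_lt_iff₀ hE] at hcgt
      nlinarith
    have h1c : e (1 / c) ≤ (2:ℝ) ^ (n * d) / Cp :=
      e_le_of_lt_einv he hR.le (by positivity) h1cE
    have key : ∀ z : Vec d, e ((1 + 2 ^ n * ‖z‖ : ℝ) ^ (-p) / c) ≤
        e (1 / c) * ((1 + 2 ^ n * ‖z‖ : ℝ) ^ (-p)) := by
      intro z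
      set r := (1 + 2 ^ n * ‖z‖ : ℝ) ^ (-p) with hrdef
      have hr0 : 0 < r := Real.rpow_pos_of_pos (by positivity) _
      have hr1 : r ≤ 1 := Real.rpow_le_one_of_one_le_of_nonpos
        (by nlinarith [norm_nonneg z, pow_pos (by norm_num : (0:ℝ) < 2) n])
        (by nlinarith)
      have hrc : r / c ≤ 1 / c := by gcongr
      have hrat := he.ratio_mono (r / c) (1 / c) (by positivity) hrc
      calc e (r / c) = (e (r / c) / (r / c)) * (r / c) := by field_simp
      _ ≤ (e (1 / c) / (1 / c)) * (r / c) := mul_le_mul_of_nonneg_right hrat (by positivity)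
      _ = e (1 / c) * r := by field_simp
    by_cases hint : Integrable (fun z : Vec d => e ((1 + 2 ^ n * ‖z‖ : ℝ) ^ (-p) / c))
    · have hg2 : Integrable (fun z : Vec d =>
          e (1 / c) * ((1 + 2 ^ n * ‖z‖ : ℝ) ^ (-p))) := hrho_int.const_mul _
      calc ∫ z : Vec d, e ((1 + 2 ^ n * ‖z‖ : ℝ) ^ (-p) / c)
          ≤ ∫ z : Vec d, e (1 / c) * ((1 + 2 ^ n * ‖z‖ : ℝ) ^ (-p)) :=
            integral_mono hint hg2 key
      _ = e (1 / c) * ∫ z : Vec d, (1 + 2 ^ n * ‖z‖ : ℝ) ^ (-p) := integral_const_mul _ _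
      _ = e (1 / c) * (((2:ℝ) ^ (n * d))⁻¹ * Cp) := by rw [hcv]
      _ ≤ ((2:ℝ) ^ (n * d) / Cp) * (((2:ℝ) ^ (n * d))⁻¹ * Cp) :=
            mul_le_mul_of_nonneg_right h1c (by positivity)
      _ = 1 := by field_simp
    · rw [integral_undef hint]; norm_num
  -- conclude via the infimum
  refine ENNReal.le_of_forall_pos_le_add fun ε hε _ => ?_
  have hc : ENNReal.ofReal (t + ε) ∈
      {c : ℝ≥0∞ | 0 < c ∧ c ≠ ∞ ∧
        ∫ x : Vec d, e ((1 + 2 ^ n * ‖x‖ : ℝ) ^ (-p) / c.toReal) ≤ 1} := by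
    refine ⟨ENNReal.ofReal_pos.2 (by positivity), ENNReal.ofReal_ne_top, ?_⟩
    rw [ENNReal.toReal_ofReal (by positivity)]
    exact hmain (t + ε) (lt_add_of_pos_right t (by exact_mod_cast hε))
  calc luxNorm e (fun z : Vec d => (1 + 2 ^ n * ‖z‖) ^ (-p)) ≤ ENNReal.ofReal (t + ε) :=
        sInf_le hc
  _ = ENNReal.ofReal t + ENNReal.ofReal (ε : ℝ) := ENNReal.ofReal_add ht.le ε.coe_nonneg
  _ = ENNReal.ofReal t + ε := by rw [ENNReal.ofReal_coe_nnreal]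

end Stmt6Helpers

/-- Lemma 2.9: for `ρ_{n,p}(z) = (1+2^n|z|)^{−p}` with `p > d` one has
`‖ρ_{n,p}‖_(e) ≤ 1/e^{-1}(2^{nd}/C_p)` with `C_p` depending only on `p` and `d`; and for
`p = d+1`, `‖ρ_{n,d+1}‖_(e) ≤ C/e^{-1}(2^{nd}) = C·2^{−nd} β_e(2^{nd})` with `C` depending on
`d` and the doubling constant of `e`. -/
theorem stmt6 (d : ℕ) :
    (∀ p : ℝ, (d : ℝ) < p → ∃ Cp : ℝ, 0 < Cp ∧
      ∀ (e : ℝ → ℝ), IsYoungE e → ∀ n : ℕ,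
        luxNorm e (fun z : Vec d => (1 + 2 ^ n * ‖z‖) ^ (-p)) ≤
          ENNReal.ofReal (1 / einv e ((2 : ℝ) ^ (n * d) / Cp))) ∧
    (∀ (e : ℝ → ℝ), IsYoungE e → ∃ C : ℝ, 0 < C ∧ ∀ n : ℕ,
      luxNorm e (fun z : Vec d => (1 + 2 ^ n * ‖z‖) ^ (-((d : ℝ) + 1))) ≤
        ENNReal.ofReal (C / einv e ((2 : ℝ) ^ (n * d))) ∧
      C / einv e ((2 : ℝ) ^ (n * d)) =
        C * ((2 : ℝ) ^ (n * d))⁻¹ * betaE e ((2 : ℝ) ^ (n * d))) := by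
  constructor
  · intro p hp
    exact ⟨∫ y : Vec d, (1 + ‖y‖) ^ (-p), Cp_pos d hp, fun e he n => lux_le d hp he n⟩
  · intro e he
    have hp : (d:ℝ) < (d:ℝ) + 1 := by linarith
    set Cp := ∫ y : Vec d, (1 + ‖y‖) ^ (-((d:ℝ) + 1)) with hCpdef
    have hCp : 0 < Cp := Cp_pos d hp
    obtain ⟨k, hk⟩ := pow_unbounded_of_one_lt Cp (by norm_num : (1:ℝ) < 2)
    refine ⟨2 ^ k, by positivity, fun n => ?_⟩
    set R := (2:ℝ) ^ (n * d) with hRdef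
    have hR : 0 < R := by positivity
    have hER : 0 < einv e R := einv_pos he hR
    have hERC : 0 < einv e (R / Cp) := einv_pos he (by positivity)
    have h1 : einv e R ≤ 2 ^ k * einv e (R / 2 ^ k) := einv_scale he hR k
    have h2 : einv e (R / 2 ^ k) ≤ einv e (R / Cp) :=
      einv_mono he (by positivity) (div_le_div_of_nonneg_left hR.le hCp hk.le)
    have hchain : 1 / einv e (R / Cp) ≤ 2 ^ k / einv e R := by
      rw [div_le_div_iff₀ hERC hER]
      nlinarith
    constructor
    · calc luxNorm e (fun z : Vec d => (1 + 2 ^ n * ‖z‖) ^ (-((d:ℝ) + 1)))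
          ≤ ENNReal.ofReal (1 / einv e (R / Cp)) := lux_le d hp he n
      _ ≤ ENNReal.ofReal ((2:ℝ) ^ k / einv e R) := ENNReal.ofReal_le_ofReal hchain
    · rw [betaE]
      field_simp
end

section
/- Let X ⊂ Y be normed spaces with continuous embedding, a ≥ 0, m ∈ ℕ* and θ > 0. Then S_{θ,m,a}(X,Y) = K_{γ,b}(X,Y) with γ = θ/(2m+θ) and b = 2ma/(2m+θ); moreover there is a universal, explicitly computable constant C such that for every y ∈ Y: (1/C) ρ^{X,Y}_{θ,m,a}(y) ≤ |y|_{γ,b} ≤ C (‖y‖_Y + ρ^{X,Y}_{θ,m,a}(y)). -/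
open MeasureTheory ENNReal Filter

open Set

/-!
Discretize the interpolation integral at the points `t_N = 2^{-N(2m+θ)} N^{-a}`, chosen so that
`c_N t_N = 2^{-2Nm}` with `c_N = 2^{Nθ} N^a`. The `N`-th term of `π` is then
`c_N (‖y - x_N‖ + t_N ‖x_N‖)`, so optimizing each `x_N` separately gives
`ρ(y) = Σ_N c_N K(y, t_N)`. On the block `(t_{N+1}, t_N]` the weight `t^{-γ-1} |ln t|^b` is
comparable to `c_N / t_N`, the block has length comparable to `t_N`, and `K(y, ·)` changes by a
bounded factor across it because `K(y, t)` increases while `K(y, t) / t` decreases. Hence each block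
contributes to `|y|_{γ,b}` about `c_N K(y, t_N)`, and the remaining interval `(t_1, 1)` contributes
at most a multiple of `‖y‖` since `K(y, t) ≤ ‖y‖`.
-/

lemma ENNReal.iInf_tsum_eq_tsum_iInf {κ ι : Type*} [Countable κ] (f : κ → ι → ℝ≥0∞) :
    ⨅ x : κ → ι, ∑' k, f k (x k) = ∑' k, ⨅ i, f k i := by
  refine le_antisymm ?_ (le_iInf fun x => ENNReal.tsum_le_tsum fun k => iInf_le _ _)
  refine ENNReal.le_of_forall_pos_le_add fun ε hε hfin => ?_
  obtain ⟨δ, hδ, hδε⟩ := ENNReal.exists_pos_sum_of_countable (ENNReal.coe_ne_zero.2 hε.ne') κ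
  have hx : ∀ k, ∃ i, f k i < (⨅ i, f k i) + δ k := fun k =>
    iInf_lt_iff.1 <| ENNReal.lt_add_right (ne_top_of_le_ne_top hfin.ne (ENNReal.le_tsum k))
      (ENNReal.coe_ne_zero.2 (hδ k).ne')
  choose x hx using hx
  calc ⨅ x : κ → ι, ∑' k, f k (x k) ≤ ∑' k, f k (x k) := iInf_le _ x
    _ ≤ ∑' k, ((⨅ i, f k i) + δ k) := ENNReal.tsum_le_tsum fun k => (hx k).le
    _ = (∑' k, ⨅ i, f k i) + ∑' k, (δ k : ℝ≥0∞) := ENNReal.tsum_add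
    _ ≤ _ := add_le_add le_rfl hδε.le

lemma ENNReal.ne_top_iff_and_exists_bounds_of_le {ι : Type*} {ρ G n : ι → ℝ≥0∞} {A B : ℝ≥0∞}
    (hA : A ≠ ∞) (hB : B ≠ ∞) (hn : ∀ i, n i ≠ ∞) (hρ : ∀ i, ρ i ≤ A * G i)
    (hG : ∀ i, G i ≤ B * (n i + ρ i)) :
    (∀ i, ρ i ≠ ∞ ↔ G i ≠ ∞) ∧
      ∃ C : ℝ≥0∞, 0 < C ∧ C ≠ ∞ ∧ ∀ i, C⁻¹ * ρ i ≤ G i ∧ G i ≤ C * (n i + ρ i) := by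
  refine ⟨fun i => ⟨fun h => ?_, fun h => ?_⟩, A + B + 1, by positivity, by simp [hA, hB],
    fun i => ⟨?_, (hG i).trans ?_⟩⟩
  · exact ne_top_of_le_ne_top (ENNReal.mul_ne_top hB (ENNReal.add_ne_top.2 ⟨hn i, h⟩)) (hG i)
  · exact ne_top_of_le_ne_top (ENNReal.mul_ne_top hA h) (hρ i)
  · rw [ENNReal.inv_mul_le_iff (by positivity) (by simp [hA, hB])]
    exact (hρ i).trans (by gcongr; rw [add_assoc]; exact le_self_add)
  · gcongr
    rw [add_right_comm]
    exact le_add_self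

lemma exists_mem_Ioc_succ {α : Type*} [LinearOrder α] {u : ℕ → α} {s : α} (h0 : s ≤ u 0)
    (h : ∃ n, u n < s) : ∃ n, s ∈ Ioc (u (n + 1)) (u n) := by
  by_contra hs
  have hle : ∀ n, s ≤ u n := fun n =>
    Nat.rec h0 (fun k hk => not_lt.1 fun hlt => hs ⟨k, hlt, hk⟩) n
  obtain ⟨n, hn⟩ := h
  exact (hle n).not_gt hn

lemma antitoneOn_rpow_mul_abs_log_rpow {γ b : ℝ} (hγ : -1 ≤ γ) (hb : 0 ≤ b) :
    AntitoneOn (fun t : ℝ => t ^ (-γ - 1) * |Real.log t| ^ b) (Ioo 0 1) := by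
  intro s hs t ht hst
  have hlog : |Real.log t| ≤ |Real.log s| := by
    rw [abs_of_nonpos (Real.log_nonpos ht.1.le ht.2.le),
      abs_of_nonpos (Real.log_nonpos hs.1.le hs.2.le)]
    exact neg_le_neg (Real.log_le_log hs.1 hst)
  exact mul_le_mul (Real.rpow_le_rpow_of_nonpos hs.1 hst (by linarith))
    (Real.rpow_le_rpow (abs_nonneg _) hlog hb) (by positivity) (Real.rpow_nonneg hs.1.le _)

section KFunctional

variable {X Y : Type*} [NormedAddCommGroup X] [NormedAddCommGroup Y] (J : X → Y) (y : Y)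

lemma Kab_le_ofReal_norm (hJ : J 0 = 0) (t : ℝ) : Kab J y t ≤ ENNReal.ofReal ‖y‖ :=
  iInf_le_of_le 0 (by simp [hJ])

lemma Kab_mono : Monotone (Kab J y) := fun _ _ h =>
  iInf_mono fun _ => by gcongr

lemma Kab_le_div_mul {s t : ℝ} (hs : 0 < s) (hst : s ≤ t) :
    Kab J y t ≤ ENNReal.ofReal (t / s) * Kab J y s := by
  have hts : 1 ≤ t / s := (one_le_div hs).2 hst
  simp only [Kab]
  rw [ENNReal.mul_iInf_of_ne (by simpa using hts.trans_lt' one_pos) ENNReal.ofReal_ne_top]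
  refine iInf_mono fun x => ?_
  have hmul : ENNReal.ofReal (t / s) * ENNReal.ofReal s = ENNReal.ofReal t := by
    rw [← ENNReal.ofReal_mul (by positivity), div_mul_cancel₀ _ hs.ne']
  rw [mul_add, ← mul_assoc, hmul]
  exact add_le_add (le_mul_of_one_le_left' (ENNReal.one_le_ofReal.2 hts)) le_rfl

end KFunctional

noncomputable def gridPt (θ a : ℝ) (m N : ℕ) : ℝ :=
  (2 : ℝ) ^ (-(N : ℝ) * (2 * m + θ)) * (N : ℝ) ^ (-a)

noncomputable def gridCoeff (θ a : ℝ) (N : ℕ) : ℝ := (2 : ℝ) ^ ((N : ℝ) * θ) * (N : ℝ) ^ a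

noncomputable def normWeight (θ a : ℝ) (m : ℕ) (t : ℝ) : ℝ :=
  t ^ (-(θ / (2 * m + θ)) - 1) * |Real.log t| ^ (2 * m * a / (2 * m + θ))

section Grid

variable {θ a : ℝ} {m N : ℕ}

lemma gridPt_pos (hN : 0 < N) : 0 < gridPt θ a m N := by
  have : (0 : ℝ) < N := by exact_mod_cast hN
  unfold gridPt; positivity

lemma gridCoeff_pos (hN : 0 < N) : 0 < gridCoeff θ a N := by
  have : (0 : ℝ) < N := by exact_mod_cast hN
  unfold gridCoeff; positivity

lemma gridPt_le_inv_two_pow (hθ : 0 ≤ θ) (ha : 0 ≤ a) (hm : 1 ≤ m) (hN : 0 < N) :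
    gridPt θ a m N ≤ 2⁻¹ ^ N := by
  have hN' : (1 : ℝ) ≤ N := by exact_mod_cast hN
  have hm' : (1 : ℝ) ≤ m := by exact_mod_cast hm
  calc gridPt θ a m N ≤ (2 : ℝ) ^ (-(N : ℝ)) * 1 := by
        unfold gridPt
        gcongr
        · exact one_le_two
        · nlinarith
        · exact Real.rpow_le_one_of_one_le_of_nonpos hN' (by linarith)
    _ = 2⁻¹ ^ N := by rw [mul_one, Real.rpow_neg zero_le_two, Real.rpow_natCast, inv_pow]

lemma gridPt_lt_one (hθ : 0 ≤ θ) (ha : 0 ≤ a) (hm : 1 ≤ m) (hN : 0 < N) :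
    gridPt θ a m N < 1 :=
  (gridPt_le_inv_two_pow hθ ha hm hN).trans_lt (pow_lt_one₀ (by norm_num) (by norm_num) hN.ne')

lemma gridPt_succ_le_half (hθ : 0 ≤ θ) (ha : 0 ≤ a) (hm : 1 ≤ m) (hN : 0 < N) :
    gridPt θ a m (N + 1) ≤ gridPt θ a m N / 2 := by
  have hN' : (0 : ℝ) < N := by exact_mod_cast hN
  have hm' : (1 : ℝ) ≤ m := by exact_mod_cast hm
  have h2 : (2 : ℝ) ^ (-((N : ℝ) + 1) * (2 * m + θ)) ≤ (2 : ℝ) ^ (-(N : ℝ) * (2 * m + θ)) / 2 := by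
    rw [div_eq_mul_inv, ← Real.rpow_neg_one, ← Real.rpow_add two_pos]
    exact Real.rpow_le_rpow_of_exponent_le one_le_two (by nlinarith)
  have hNa : ((N : ℝ) + 1) ^ (-a) ≤ (N : ℝ) ^ (-a) :=
    Real.rpow_le_rpow_of_nonpos hN' (by linarith) (by linarith)
  unfold gridPt
  push_cast
  calc (2 : ℝ) ^ (-((N : ℝ) + 1) * (2 * m + θ)) * ((N : ℝ) + 1) ^ (-a)
      ≤ (2 : ℝ) ^ (-(N : ℝ) * (2 * m + θ)) / 2 * (N : ℝ) ^ (-a) := by gcongr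
    _ = _ := by ring

lemma gridPt_le_mul_gridPt_succ (ha : 0 ≤ a) (hN : 0 < N) :
    gridPt θ a m N ≤ (2 : ℝ) ^ (2 * m + θ + a) * gridPt θ a m (N + 1) := by
  have hN' : (1 : ℝ) ≤ N := by exact_mod_cast hN
  have h2 : (2 : ℝ) ^ (-(N : ℝ) * (2 * m + θ)) =
      (2 : ℝ) ^ (2 * m + θ) * (2 : ℝ) ^ (-((N : ℝ) + 1) * (2 * m + θ)) := by
    rw [← Real.rpow_add two_pos]; ring_nf
  have hNa : (N : ℝ) ^ (-a) ≤ (2 : ℝ) ^ a * ((N : ℝ) + 1) ^ (-a) := by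
    have h2a : (2 : ℝ) ^ a = 2⁻¹ ^ (-a) := by
      rw [Real.rpow_neg (by norm_num), Real.inv_rpow zero_le_two, inv_inv]
    rw [h2a, ← Real.mul_rpow (by norm_num) (by positivity)]
    exact Real.rpow_le_rpow_of_nonpos (by positivity) (by linarith) (by linarith)
  unfold gridPt
  push_cast
  rw [h2, Real.rpow_add two_pos (2 * m + θ) a]
  calc (2 : ℝ) ^ (2 * m + θ) * (2 : ℝ) ^ (-((N : ℝ) + 1) * (2 * m + θ)) * (N : ℝ) ^ (-a)
      ≤ (2 : ℝ) ^ (2 * m + θ) * (2 : ℝ) ^ (-((N : ℝ) + 1) * (2 * m + θ)) *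
          ((2 : ℝ) ^ a * ((N : ℝ) + 1) ^ (-a)) := by gcongr
    _ = _ := by ring

lemma gridCoeff_succ_le (ha : 0 ≤ a) (hN : 0 < N) :
    gridCoeff θ a (N + 1) ≤ (2 : ℝ) ^ (θ + a) * gridCoeff θ a N := by
  have hN' : (1 : ℝ) ≤ N := by exact_mod_cast hN
  have hNa : ((N : ℝ) + 1) ^ a ≤ (2 : ℝ) ^ a * (N : ℝ) ^ a := by
    rw [← Real.mul_rpow zero_le_two (by positivity)]
    exact Real.rpow_le_rpow (by positivity) (by linarith) ha
  unfold gridCoeff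
  push_cast
  rw [add_mul, one_mul, Real.rpow_add two_pos, Real.rpow_add two_pos]
  calc (2 : ℝ) ^ ((N : ℝ) * θ) * (2 : ℝ) ^ θ * ((N : ℝ) + 1) ^ a
      ≤ (2 : ℝ) ^ ((N : ℝ) * θ) * (2 : ℝ) ^ θ * ((2 : ℝ) ^ a * (N : ℝ) ^ a) := by gcongr
    _ = _ := by ring

lemma gridCoeff_mul_gridPt (hN : 0 < N) :
    gridCoeff θ a N * gridPt θ a m N = ((2 : ℝ) ^ (2 * N * m))⁻¹ := by
  have hN' : (0 : ℝ) < N := by exact_mod_cast hN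
  unfold gridCoeff gridPt
  rw [mul_mul_mul_comm, ← Real.rpow_add two_pos, ← Real.rpow_add hN', add_neg_cancel,
    Real.rpow_zero, mul_one, ← Real.rpow_natCast, ← Real.rpow_neg zero_le_two]
  push_cast
  ring_nf

lemma abs_log_gridPt (hθ : 0 ≤ θ) (ha : 0 ≤ a) (hN : 0 < N) :
    |Real.log (gridPt θ a m N)| = N * (2 * m + θ) * Real.log 2 + a * Real.log N := by
  have hN' : (1 : ℝ) ≤ N := by exact_mod_cast hN
  have hlog : Real.log (gridPt θ a m N) = -(N * (2 * m + θ) * Real.log 2 + a * Real.log N) := by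
    rw [gridPt, Real.log_mul (by positivity) (by positivity), Real.log_rpow two_pos,
      Real.log_rpow (by positivity)]
    ring
  rw [hlog, abs_neg, abs_of_nonneg]
  have := Real.log_nonneg hN'
  positivity

lemma le_abs_log_gridPt (hθ : 0 ≤ θ) (ha : 0 ≤ a) (hm : 1 ≤ m) (hN : 0 < N) :
    (N : ℝ) ≤ |Real.log (gridPt θ a m N)| := by
  have hN' : (1 : ℝ) ≤ N := by exact_mod_cast hN
  have hm' : (1 : ℝ) ≤ m := by exact_mod_cast hm
  have h2 := Real.log_two_gt_d9
  have hσ : 1 ≤ (2 * m + θ) * Real.log 2 := by nlinarith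
  rw [abs_log_gridPt hθ ha hN]
  nlinarith [mul_le_mul_of_nonneg_left hσ (zero_le_one.trans hN'),
    mul_nonneg ha (Real.log_nonneg hN')]

lemma abs_log_gridPt_le (hθ : 0 ≤ θ) (ha : 0 ≤ a) (hN : 0 < N) :
    |Real.log (gridPt θ a m N)| ≤ N * (2 * m + θ + a) := by
  have hN' : (0 : ℝ) < N := by exact_mod_cast hN
  have h2 := Real.log_two_lt_d9
  have hlogN : Real.log N ≤ N := (Real.log_le_sub_one_of_pos hN').trans (by linarith)
  have hσ : (0 : ℝ) ≤ N * (2 * m + θ) := by positivity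
  rw [abs_log_gridPt hθ ha hN]
  nlinarith [mul_le_mul_of_nonneg_left hlogN ha]

/-- Here `t_N ^ (-γ) = 2 ^ (N θ) N ^ (a γ)` and `a γ + b = a`: this is what fixes `γ` and `b`. -/
lemma normWeight_gridPt_mul (hθ : 0 < θ) (hN : 0 < N) :
    normWeight θ a m (gridPt θ a m N) * gridPt θ a m N =
      gridCoeff θ a N * (|Real.log (gridPt θ a m N)| / N) ^ (2 * m * a / (2 * m + θ)) := by
  have hN' : (0 : ℝ) < N := by exact_mod_cast hN
  have ht : 0 < gridPt θ a m N := gridPt_pos hN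
  have hγ : gridPt θ a m N ^ (-(θ / (2 * m + θ))) =
      (2 : ℝ) ^ ((N : ℝ) * θ) * (N : ℝ) ^ (a * (θ / (2 * m + θ))) := by
    rw [gridPt, Real.mul_rpow (by positivity) (by positivity), ← Real.rpow_mul zero_le_two,
      ← Real.rpow_mul hN'.le]
    congr 2 <;> field_simp
  have hb : (N : ℝ) ^ a =
      (N : ℝ) ^ (a * (θ / (2 * m + θ))) * (N : ℝ) ^ (2 * m * a / (2 * m + θ)) := by
    rw [← Real.rpow_add hN']; congr 1; field_simp; ring
  rw [normWeight, mul_right_comm, ← Real.rpow_add_one ht.ne', sub_add_cancel, hγ,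
    Real.div_rpow (abs_nonneg _) hN'.le, gridCoeff, hb]
  field_simp

lemma gridCoeff_le_normWeight_mul (hθ : 0 < θ) (ha : 0 ≤ a) (hm : 1 ≤ m) (hN : 0 < N) :
    gridCoeff θ a N ≤ normWeight θ a m (gridPt θ a m N) * gridPt θ a m N := by
  have hN' : (0 : ℝ) < N := by exact_mod_cast hN
  rw [normWeight_gridPt_mul hθ hN]
  refine le_mul_of_one_le_right (gridCoeff_pos hN).le (Real.one_le_rpow ?_ (by positivity))
  rw [one_le_div hN']
  exact le_abs_log_gridPt hθ.le ha hm hN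

lemma normWeight_mul_le_gridCoeff (hθ : 0 < θ) (ha : 0 ≤ a) (hN : 0 < N) :
    normWeight θ a m (gridPt θ a m N) * gridPt θ a m N ≤
      (2 * m + θ + a) ^ (2 * m * a / (2 * m + θ)) * gridCoeff θ a N := by
  have hN' : (0 : ℝ) < N := by exact_mod_cast hN
  rw [normWeight_gridPt_mul hθ hN, mul_comm]
  gcongr
  · exact (gridCoeff_pos hN).le
  · rw [div_le_iff₀ hN', mul_comm]
    exact abs_log_gridPt_le hθ.le ha hN

lemma normWeight_nonneg {t : ℝ} (ht : 0 ≤ t) : 0 ≤ normWeight θ a m t := by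
  unfold normWeight; positivity

lemma normWeight_antitoneOn (hθ : 0 < θ) (ha : 0 ≤ a) : AntitoneOn (normWeight θ a m) (Ioo 0 1) :=
  antitoneOn_rpow_mul_abs_log_rpow (γ := θ / (2 * m + θ)) (by
    have : 0 ≤ θ / (2 * m + θ) := by positivity
    linarith) (by positivity)

lemma antitone_gridPt_succ (hθ : 0 ≤ θ) (ha : 0 ≤ a) (hm : 1 ≤ m) :
    Antitone fun n : ℕ => gridPt θ a m (n + 1) :=
  antitone_nat_of_succ_le fun n => (gridPt_succ_le_half hθ ha hm n.succ_pos).trans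
    (half_le_self (gridPt_pos n.succ_pos).le)

lemma pairwise_disjoint_Ioc_gridPt (hθ : 0 ≤ θ) (ha : 0 ≤ a) (hm : 1 ≤ m) :
    Pairwise (Function.onFun Disjoint
      fun n : ℕ => Ioc (gridPt θ a m (n + 2)) (gridPt θ a m (n + 1))) := by
  simpa [Order.succ_eq_add_one] using (antitone_gridPt_succ hθ ha hm).pairwise_disjoint_on_Ioc_succ

lemma Ioo_zero_one_subset_iUnion_Ioc_gridPt (hθ : 0 ≤ θ) (ha : 0 ≤ a) (hm : 1 ≤ m) :
    Ioo (0 : ℝ) 1 ⊆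
      Ioo (gridPt θ a m 1) 1 ∪ ⋃ n : ℕ, Ioc (gridPt θ a m (n + 2)) (gridPt θ a m (n + 1)) := by
  rintro s ⟨hs0, hs1⟩
  rcases lt_or_ge (gridPt θ a m 1) s with h | h
  · exact Or.inl ⟨h, hs1⟩
  obtain ⟨n, hn⟩ := exists_pow_lt_of_lt_one hs0 (by norm_num : (2 : ℝ)⁻¹ < 1)
  have hsmall : gridPt θ a m (n + 1) < s :=
    ((gridPt_le_inv_two_pow hθ ha hm n.succ_pos).trans (pow_le_pow_of_le_one (by norm_num)
      (by norm_num) n.le_succ)).trans_lt hn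
  obtain ⟨k, hk⟩ := exists_mem_Ioc_succ (u := fun n => gridPt θ a m (n + 1)) h ⟨n, hsmall⟩
  exact Or.inr (mem_iUnion.2 ⟨k, hk⟩)

end Grid

section Discretization

variable {X Y : Type*} [NormedAddCommGroup X] [NormedAddCommGroup Y] (J : X → Y) (y : Y)
  {θ a : ℝ} {m : ℕ}

lemma ofReal_gridCoeff_mul_ofReal_gridPt (N : ℕ) :
    ENNReal.ofReal (gridCoeff θ a (N + 1)) * ENNReal.ofReal (gridPt θ a m (N + 1)) =
      ((2 : ℝ≥0∞) ^ (2 * (N + 1) * m))⁻¹ := by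
  rw [← ENNReal.ofReal_mul (gridCoeff_pos N.succ_pos).le, gridCoeff_mul_gridPt N.succ_pos,
    ENNReal.ofReal_inv_of_pos (by positivity), ENNReal.ofReal_pow zero_le_two]
  norm_num

lemma rhoAb_eq_tsum :
    rhoAb J θ a m y =
      ∑' n : ℕ, ENNReal.ofReal (gridCoeff θ a (n + 1)) * Kab J y (gridPt θ a m (n + 1)) := by
  set F : ℕ → X → ℝ≥0∞ := fun n v => ENNReal.ofReal (gridCoeff θ a (n + 1)) *
    (ENNReal.ofReal ‖y - J v‖ + ENNReal.ofReal (gridPt θ a m (n + 1)) * ENNReal.ofReal ‖v‖)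
  have hpi : ∀ x : ℕ → X, piAb J θ a m y x = ∑' n, F n (x (n + 1)) := fun x => by
    refine tsum_congr fun n => ?_
    simp only [F]
    rw [mul_add (ENNReal.ofReal _), ← mul_assoc, ofReal_gridCoeff_mul_ofReal_gridPt, gridCoeff]
    push_cast
    ring_nf
  have hshift : Function.Surjective fun (x : ℕ → X) (n : ℕ) => x (n + 1) :=
    fun x => ⟨fun n => x (n - 1), rfl⟩
  calc rhoAb J θ a m y = ⨅ x : ℕ → X, ∑' n, F n (x (n + 1)) := iInf_congr hpi
    _ = ⨅ x : ℕ → X, ∑' n, F n (x n) := hshift.iInf_comp fun x => ∑' n, F n (x n)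
    _ = ∑' n, ⨅ v, F n v := ENNReal.iInf_tsum_eq_tsum_iInf F
    _ = _ := tsum_congr fun n => (ENNReal.mul_iInf_of_ne
      (ENNReal.ofReal_pos.2 (gridCoeff_pos n.succ_pos)).ne' ENNReal.ofReal_ne_top).symm

lemma ofReal_gridCoeff_mul_Kab_le (hθ : 0 < θ) (ha : 0 ≤ a) (hm : 1 ≤ m) {N : ℕ} (hN : 0 < N) :
    ENNReal.ofReal (gridCoeff θ a N) * Kab J y (gridPt θ a m N) ≤
      ENNReal.ofReal ((2 : ℝ) ^ (2 * m + θ + a + 1)) *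
        ∫⁻ u in Ioc (gridPt θ a m (N + 1)) (gridPt θ a m N),
          ENNReal.ofReal (normWeight θ a m u) * Kab J y u := by
  set s := gridPt θ a m (N + 1)
  set t := gridPt θ a m N
  have hs : 0 < s := gridPt_pos N.succ_pos
  have hst : s ≤ t / 2 := gridPt_succ_le_half hθ.le ha hm hN
  have ht : t ∈ Ioo 0 1 := ⟨gridPt_pos hN, gridPt_lt_one hθ.le ha hm hN⟩
  have hwt : 0 ≤ normWeight θ a m t := normWeight_nonneg ht.1.le
  have hcoeff : gridCoeff θ a N * (t / s) ≤
      (2 : ℝ) ^ (2 * m + θ + a + 1) * (normWeight θ a m t * (t - s)) := by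
    have hts : t / s ≤ (2 : ℝ) ^ (2 * m + θ + a) := by
      rw [div_le_iff₀ hs]
      exact gridPt_le_mul_gridPt_succ ha hN
    calc gridCoeff θ a N * (t / s) ≤ normWeight θ a m t * t * (2 : ℝ) ^ (2 * m + θ + a) :=
          mul_le_mul (gridCoeff_le_normWeight_mul hθ ha hm hN) hts (div_nonneg ht.1.le hs.le)
            (mul_nonneg hwt ht.1.le)
      _ ≤ normWeight θ a m t * (2 * (t - s)) * (2 : ℝ) ^ (2 * m + θ + a) := by
          gcongr; linarith
      _ = _ := by rw [Real.rpow_add_one two_ne_zero]; ring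
  calc ENNReal.ofReal (gridCoeff θ a N) * Kab J y t
      ≤ ENNReal.ofReal (gridCoeff θ a N) * (ENNReal.ofReal (t / s) * Kab J y s) := by
        gcongr; exact Kab_le_div_mul J y hs (by linarith)
    _ = ENNReal.ofReal (gridCoeff θ a N * (t / s)) * Kab J y s := by
        rw [ENNReal.ofReal_mul (gridCoeff_pos hN).le, mul_assoc]
    _ ≤ ENNReal.ofReal ((2 : ℝ) ^ (2 * m + θ + a + 1) * (normWeight θ a m t * (t - s))) *
          Kab J y s := by gcongr
    _ = ENNReal.ofReal ((2 : ℝ) ^ (2 * m + θ + a + 1)) *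
          ∫⁻ _ in Ioc s t, ENNReal.ofReal (normWeight θ a m t) * Kab J y s := by
        rw [setLIntegral_const, Real.volume_Ioc, ENNReal.ofReal_mul (by positivity),
          ENNReal.ofReal_mul hwt]
        ring
    _ ≤ _ := by
        gcongr 1
        refine setLIntegral_mono' measurableSet_Ioc fun u hu => ?_
        have hu' : u ∈ Ioo 0 1 := ⟨hs.trans hu.1, hu.2.trans_lt ht.2⟩
        gcongr
        · exact normWeight_antitoneOn hθ ha hu' ht hu.2
        · exact Kab_mono J y hu.1.le

lemma setLIntegral_Ioc_gridPt_le (hθ : 0 < θ) (ha : 0 ≤ a) (hm : 1 ≤ m) {N : ℕ} (hN : 0 < N) :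
    ∫⁻ u in Ioc (gridPt θ a m (N + 1)) (gridPt θ a m N),
        ENNReal.ofReal (normWeight θ a m u) * Kab J y u ≤
      ENNReal.ofReal ((2 : ℝ) ^ (2 * m + θ + a) * (2 : ℝ) ^ (θ + a) *
        (2 * m + θ + a) ^ (2 * m * a / (2 * m + θ)) * gridCoeff θ a N) *
        Kab J y (gridPt θ a m N) := by
  set s := gridPt θ a m (N + 1)
  set t := gridPt θ a m N
  have hs : s ∈ Ioo 0 1 := ⟨gridPt_pos N.succ_pos, gridPt_lt_one hθ.le ha hm N.succ_pos⟩
  have hws : 0 ≤ normWeight θ a m s := normWeight_nonneg hs.1.le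
  have hcoeff : normWeight θ a m s * t ≤ (2 : ℝ) ^ (2 * m + θ + a) * (2 : ℝ) ^ (θ + a) *
      (2 * m + θ + a) ^ (2 * m * a / (2 * m + θ)) * gridCoeff θ a N :=
    calc normWeight θ a m s * t ≤ normWeight θ a m s * ((2 : ℝ) ^ (2 * m + θ + a) * s) := by
          gcongr; exact gridPt_le_mul_gridPt_succ ha hN
      _ = (2 : ℝ) ^ (2 * m + θ + a) * (normWeight θ a m s * s) := by ring
      _ ≤ (2 : ℝ) ^ (2 * m + θ + a) * ((2 * m + θ + a) ^ (2 * m * a / (2 * m + θ)) *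
          ((2 : ℝ) ^ (θ + a) * gridCoeff θ a N)) := by
          refine mul_le_mul_of_nonneg_left ((normWeight_mul_le_gridCoeff hθ ha N.succ_pos).trans
            (mul_le_mul_of_nonneg_left (gridCoeff_succ_le ha hN) (by positivity))) (by positivity)
      _ = _ := by ring
  calc ∫⁻ u in Ioc s t, ENNReal.ofReal (normWeight θ a m u) * Kab J y u
      ≤ ∫⁻ _ in Ioc s t, ENNReal.ofReal (normWeight θ a m s) * Kab J y t := by
        refine setLIntegral_mono' measurableSet_Ioc fun u hu => ?_
        have hu' : u ∈ Ioo 0 1 :=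
          ⟨hs.1.trans hu.1, hu.2.trans_lt (gridPt_lt_one hθ.le ha hm hN)⟩
        gcongr
        · exact normWeight_antitoneOn hθ ha hs hu' hu.1.le
        · exact Kab_mono J y hu.2
    _ = ENNReal.ofReal (normWeight θ a m s * (t - s)) * Kab J y t := by
        rw [setLIntegral_const, Real.volume_Ioc, ENNReal.ofReal_mul hws]
        ring
    _ ≤ _ := by
        gcongr ENNReal.ofReal ?_ * _
        exact (mul_le_mul_of_nonneg_left (sub_le_self t hs.1.le) hws).trans hcoeff

lemma setLIntegral_Ioo_gridPt_one_le (hJ : J 0 = 0) (hθ : 0 < θ) (ha : 0 ≤ a) (hm : 1 ≤ m) :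
    ∫⁻ u in Ioo (gridPt θ a m 1) 1, ENNReal.ofReal (normWeight θ a m u) * Kab J y u ≤
      ENNReal.ofReal (normWeight θ a m (gridPt θ a m 1)) * ENNReal.ofReal ‖y‖ := by
  have ht : gridPt θ a m 1 ∈ Ioo 0 1 := ⟨gridPt_pos one_pos, gridPt_lt_one hθ.le ha hm one_pos⟩
  calc ∫⁻ u in Ioo (gridPt θ a m 1) 1, ENNReal.ofReal (normWeight θ a m u) * Kab J y u
      ≤ ∫⁻ _ in Ioo (gridPt θ a m 1) 1,
          ENNReal.ofReal (normWeight θ a m (gridPt θ a m 1)) * ENNReal.ofReal ‖y‖ := by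
        refine setLIntegral_mono' measurableSet_Ioo fun u hu => ?_
        gcongr
        · exact normWeight_antitoneOn hθ ha ht ⟨ht.1.trans hu.1, hu.2⟩ hu.1.le
        · exact Kab_le_ofReal_norm J y hJ u
    _ = ENNReal.ofReal (normWeight θ a m (gridPt θ a m 1)) * ENNReal.ofReal ‖y‖ *
          ENNReal.ofReal (1 - gridPt θ a m 1) := by
        rw [setLIntegral_const, Real.volume_Ioo]
    _ ≤ _ := mul_le_of_le_one_right' (ENNReal.ofReal_le_one.2 (by linarith [ht.1]))

lemma tsum_le_normGB (hθ : 0 < θ) (ha : 0 ≤ a) (hm : 1 ≤ m) :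
    ∑' n : ℕ, ENNReal.ofReal (gridCoeff θ a (n + 1)) * Kab J y (gridPt θ a m (n + 1)) ≤
      ENNReal.ofReal ((2 : ℝ) ^ (2 * m + θ + a + 1)) *
        normGB J (θ / (2 * m + θ)) (2 * m * a / (2 * m + θ)) y := by
  have hblocks : (⋃ n : ℕ, Ioc (gridPt θ a m (n + 2)) (gridPt θ a m (n + 1))) ⊆ Ioo 0 1 :=
    iUnion_subset fun n => (Ioc_subset_Ioc_left (gridPt_pos (n + 1).succ_pos).le).trans
      (Ioc_subset_Ioo_right (gridPt_lt_one hθ.le ha hm n.succ_pos))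
  calc ∑' n : ℕ, ENNReal.ofReal (gridCoeff θ a (n + 1)) * Kab J y (gridPt θ a m (n + 1))
      ≤ ∑' n : ℕ, ENNReal.ofReal ((2 : ℝ) ^ (2 * m + θ + a + 1)) *
          ∫⁻ u in Ioc (gridPt θ a m (n + 2)) (gridPt θ a m (n + 1)),
            ENNReal.ofReal (normWeight θ a m u) * Kab J y u :=
        ENNReal.tsum_le_tsum fun n => ofReal_gridCoeff_mul_Kab_le J y hθ ha hm n.succ_pos
    _ = ENNReal.ofReal ((2 : ℝ) ^ (2 * m + θ + a + 1)) *
          ∫⁻ u in ⋃ n : ℕ, Ioc (gridPt θ a m (n + 2)) (gridPt θ a m (n + 1)),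
            ENNReal.ofReal (normWeight θ a m u) * Kab J y u := by
        rw [ENNReal.tsum_mul_left, lintegral_iUnion (fun _ => measurableSet_Ioc)
          (pairwise_disjoint_Ioc_gridPt hθ.le ha hm)]
    _ ≤ _ := by
        gcongr
        exact lintegral_mono_set hblocks

lemma normGB_le (hJ : J 0 = 0) (hθ : 0 < θ) (ha : 0 ≤ a) (hm : 1 ≤ m) :
    normGB J (θ / (2 * m + θ)) (2 * m * a / (2 * m + θ)) y ≤
      ENNReal.ofReal (normWeight θ a m (gridPt θ a m 1) + (2 : ℝ) ^ (2 * m + θ + a) *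
        (2 : ℝ) ^ (θ + a) * (2 * m + θ + a) ^ (2 * m * a / (2 * m + θ))) *
      (ENNReal.ofReal ‖y‖ +
        ∑' n : ℕ, ENNReal.ofReal (gridCoeff θ a (n + 1)) * Kab J y (gridPt θ a m (n + 1))) := by
  set F := fun u => ENNReal.ofReal (normWeight θ a m u) * Kab J y u
  set B : ℝ := (2 : ℝ) ^ (2 * m + θ + a) * (2 : ℝ) ^ (θ + a) *
    (2 * m + θ + a) ^ (2 * m * a / (2 * m + θ))
  have hB : 0 ≤ B := by positivity
  have hw : 0 ≤ normWeight θ a m (gridPt θ a m 1) := normWeight_nonneg (gridPt_pos one_pos).le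
  calc normGB J (θ / (2 * m + θ)) (2 * m * a / (2 * m + θ)) y = ∫⁻ u in Ioo 0 1, F u := rfl
    _ ≤ ∫⁻ u in Ioo (gridPt θ a m 1) 1 ∪
          ⋃ n : ℕ, Ioc (gridPt θ a m (n + 2)) (gridPt θ a m (n + 1)), F u :=
        lintegral_mono_set (Ioo_zero_one_subset_iUnion_Ioc_gridPt hθ.le ha hm)
    _ ≤ (∫⁻ u in Ioo (gridPt θ a m 1) 1, F u) +
          ∑' n : ℕ, ∫⁻ u in Ioc (gridPt θ a m (n + 2)) (gridPt θ a m (n + 1)), F u :=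
        (lintegral_union_le _ _ _).trans (add_le_add le_rfl (lintegral_iUnion_le _ _))
    _ ≤ ENNReal.ofReal (normWeight θ a m (gridPt θ a m 1)) * ENNReal.ofReal ‖y‖ +
          ∑' n : ℕ, ENNReal.ofReal (B * gridCoeff θ a (n + 1)) * Kab J y (gridPt θ a m (n + 1)) :=
        add_le_add (setLIntegral_Ioo_gridPt_one_le J y hJ hθ ha hm)
          (ENNReal.tsum_le_tsum fun n => setLIntegral_Ioc_gridPt_le J y hθ ha hm n.succ_pos)
    _ = ENNReal.ofReal (normWeight θ a m (gridPt θ a m 1)) * ENNReal.ofReal ‖y‖ +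
          ENNReal.ofReal B *
            ∑' n : ℕ, ENNReal.ofReal (gridCoeff θ a (n + 1)) * Kab J y (gridPt θ a m (n + 1)) := by
        simp_rw [ENNReal.ofReal_mul hB, mul_assoc, ENNReal.tsum_mul_left]
    _ ≤ _ := by
        rw [mul_add]
        gcongr <;> linarith

end Discretization

theorem stmt14_general {X Y : Type*} [NormedAddCommGroup X] [NormedAddCommGroup Y]
    [NormedSpace ℝ X] [NormedSpace ℝ Y]
    (J : X →ₗ[ℝ] Y)
    (aa : ℝ) (ha : 0 ≤ aa) (m : ℕ) (hm : 1 ≤ m) (θ : ℝ) (hθ : 0 < θ) :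
    -- S_{θ,m,a}(X,Y) = K_{γ,b}(X,Y)
    (∀ y : Y, rhoAb J θ aa m y ≠ ∞ ↔
      normGB J (θ / (2 * m + θ)) (2 * m * aa / (2 * m + θ)) y ≠ ∞) ∧
    -- the two-sided norm estimate
    (∃ C : ℝ≥0∞, 0 < C ∧ C ≠ ∞ ∧ ∀ y : Y,
      C⁻¹ * rhoAb J θ aa m y ≤
        normGB J (θ / (2 * m + θ)) (2 * m * aa / (2 * m + θ)) y ∧
      normGB J (θ / (2 * m + θ)) (2 * m * aa / (2 * m + θ)) y ≤
        C * (ENNReal.ofReal ‖y‖ + rhoAb J θ aa m y)) :=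
  ENNReal.ne_top_iff_and_exists_bounds_of_le ENNReal.ofReal_ne_top ENNReal.ofReal_ne_top
    (fun _ => ENNReal.ofReal_ne_top)
    (fun y => (rhoAb_eq_tsum J y).trans_le (tsum_le_normGB J y hθ ha hm))
    (fun y => (normGB_le J y (map_zero J) hθ ha hm).trans_eq (by rw [rhoAb_eq_tsum]))

/-- Proposition 6.4: for normed spaces `X ⊂ Y` (continuous embedding `J`),
`a ≥ 0`, `m ∈ ℕ*`, `θ > 0`: `S_{θ,m,a}(X,Y) = K_{γ,b}(X,Y)` with `γ = θ/(2m+θ)`,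
`b = 2ma/(2m+θ)`, and there is a universal constant `C` with
`(1/C) ρ^{X,Y}_{θ,m,a}(y) ≤ |y|_{γ,b} ≤ C(‖y‖_Y + ρ^{X,Y}_{θ,m,a}(y))` for all `y`. -/
theorem stmt14 {X Y : Type*} [NormedAddCommGroup X] [NormedAddCommGroup Y]
    [NormedSpace ℝ X] [NormedSpace ℝ Y]
    (J : X →ₗ[ℝ] Y) (hJ : ∃ c : ℝ, ∀ x, ‖J x‖ ≤ c * ‖x‖)
    (aa : ℝ) (ha : 0 ≤ aa) (m : ℕ) (hm : 1 ≤ m) (θ : ℝ) (hθ : 0 < θ) :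
    -- S_{θ,m,a}(X,Y) = K_{γ,b}(X,Y)
    (∀ y : Y, rhoAb J θ aa m y ≠ ∞ ↔
      normGB J (θ / (2 * m + θ)) (2 * m * aa / (2 * m + θ)) y ≠ ∞) ∧
    -- the two-sided norm estimate
    (∃ C : ℝ≥0∞, 0 < C ∧ C ≠ ∞ ∧ ∀ y : Y,
      C⁻¹ * rhoAb J θ aa m y ≤
        normGB J (θ / (2 * m + θ)) (2 * m * aa / (2 * m + θ)) y ∧
      normGB J (θ / (2 * m + θ)) (2 * m * aa / (2 * m + θ)) y ≤
        C * (ENNReal.ofReal ‖y‖ + rhoAb J θ aa m y)) :=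
  stmt14_general J aa ha m hm θ hθ
end

section
/- Let X ⊂ Y be normed spaces with continuous embedding, a ≥ 0, m ∈ ℕ* and θ > 0. Then B_{α,β}(X,Y) ⊂ S_{θ,m,a}(X,Y) for α = θ/(2m) and β = 2 + a + θ/m: every y ∈ Y with limsup_{R→∞} R^{θ/(2m)} (ln R)^{2+a+θ/m} d_Y(y, B_X(R)) < ∞ admits a sequence x_n ∈ X with Σ_{n=1}^∞ [2^{nθ} n^a ‖y−x_n‖_Y + 2^{−2nm}‖x_n‖_X] < ∞. -/
open MeasureTheory ENNReal Filter

set_option maxHeartbeats 1000000 in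
/-- Proposition 6.5: `B_{α,β}(X,Y) ⊂ S_{θ,m,a}(X,Y)` with `α = θ/(2m)`,
`β = 2 + a + θ/m`: every `y ∈ Y` with
`limsup_{R→∞} R^{θ/(2m)} (ln R)^{2+a+θ/m} d_Y(y, B_X(R)) < ∞` admits a sequence `x_n ∈ X`
with `Σ_{n=1}^∞ [2^{nθ} n^a ‖y−x_n‖_Y + 2^{−2nm}‖x_n‖_X] < ∞`. -/
theorem stmt15 {X Y : Type*} [NormedAddCommGroup X] [NormedAddCommGroup Y]
    [NormedSpace ℝ X] [NormedSpace ℝ Y]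
    (J : X →ₗ[ℝ] Y) (hJ : ∃ c : ℝ, ∀ x, ‖J x‖ ≤ c * ‖x‖)
    (aa : ℝ) (ha : 0 ≤ aa) (m : ℕ) (hm : 1 ≤ m) (θ : ℝ) (hθ : 0 < θ)
    (y : Y)
    (hy : ∃ Cb : ℝ, ∀ᶠ R in atTop,
      R ^ (θ / (2 * m)) * Real.log R ^ (2 + aa + θ / m) * dYball J y R ≤ Cb) :
    ∃ x : ℕ → X, piAb J θ aa m y x ≠ ∞ := by
  classical
  obtain ⟨Cb, hCb⟩ := hy
  set C : ℝ := max Cb 0 with hCdef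
  have hC0 : 0 ≤ C := le_max_right _ _
  have hm0 : (0:ℝ) < (m:ℝ) := by exact_mod_cast Nat.lt_of_lt_of_le Nat.zero_lt_one hm
  -- the radii, distances, coefficients and slacks
  set R : ℕ → ℝ := fun k => (2:ℝ) ^ (2*k*m) / (k:ℝ)^2 with hRdef
  set D : ℕ → ℝ := fun k => dYball (⇑J) y (R k) with hDdef
  set c : ℕ → ℝ := fun k => (2:ℝ) ^ ((k:ℝ)*θ) * (k:ℝ) ^ aa with hcdef
  set ε : ℕ → ℝ := fun k => (c k * (k:ℝ)^2)⁻¹ with hεdef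
  have hRpos : ∀ k : ℕ, 1 ≤ k → 0 < R k := by
    intro k hk
    have hk0 : (0:ℝ) < (k:ℝ) := by exact_mod_cast hk
    simp only [hRdef]
    positivity
  have hcpos : ∀ k : ℕ, 1 ≤ k → 0 < c k := by
    intro k hk
    have hk0 : (0:ℝ) < (k:ℝ) := by exact_mod_cast hk
    simp only [hcdef]
    positivity
  have hεpos : ∀ k : ℕ, 1 ≤ k → 0 < ε k := by
    intro k hk
    have hk0 : (0:ℝ) < (k:ℝ) := by exact_mod_cast hk
    have := hcpos k hk
    simp only [hεdef]
    positivity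
  have hD0 : ∀ k : ℕ, 0 ≤ D k := by
    intro k
    refine Real.sInf_nonneg ?_
    rintro r ⟨x, -, rfl⟩
    exact norm_nonneg _
  -- log of 2 is bigger than 1/2
  have hlog2 : 0 < 2 * Real.log 2 - 1 := by
    have := Real.log_two_gt_d9
    linarith
  -- eventually `2 log k ≤ (2 log 2 - 1) k`
  have hlogk : ∀ᶠ k : ℕ in atTop, 2 * Real.log k ≤ (2 * Real.log 2 - 1) * k := by
    have h := Real.isLittleO_log_id_atTop.def
      (show (0:ℝ) < (2*Real.log 2 - 1)/2 by linarith)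
    have h2 := (tendsto_natCast_atTop_atTop (R := ℝ)).eventually h
    filter_upwards [h2, Filter.eventually_ge_atTop 1] with k hk hk1
    have hk0 : (1:ℝ) ≤ (k:ℝ) := by exact_mod_cast hk1
    have habs : |Real.log (k:ℝ)| ≤ (2*Real.log 2-1)/2 * |(k:ℝ)| := by
      simpa [Real.norm_eq_abs] using hk
    rw [abs_of_nonneg (Real.log_nonneg hk0), abs_of_nonneg (by linarith)] at habs
    nlinarith
  -- eventually `k ≤ log (R k)`
  have hElog : ∀ᶠ k : ℕ in atTop, (k:ℝ) ≤ Real.log (R k) := by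
    filter_upwards [hlogk, Filter.eventually_ge_atTop 1] with k hk hk1
    have hk0 : (0:ℝ) < (k:ℝ) := by exact_mod_cast hk1
    have h2 : Real.log (R k) = (2*k*m : ℕ) * Real.log 2 - 2 * Real.log k := by
      simp only [hRdef]
      rw [Real.log_div (by positivity) (by positivity), Real.log_pow, Real.log_pow]
      push_cast
      ring
    have hm1 : (1:ℝ) ≤ (m:ℝ) := by exact_mod_cast hm
    have hmk : (2:ℝ)*(k:ℝ) ≤ ((2*k*m : ℕ) : ℝ) := by
      push_cast
      nlinarith
    have hlog2pos : (0:ℝ) ≤ Real.log 2 := Real.log_nonneg (by norm_num)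
    have : (2:ℝ)*(k:ℝ)*Real.log 2 ≤ ((2*k*m : ℕ) : ℝ) * Real.log 2 :=
      mul_le_mul_of_nonneg_right hmk hlog2pos
    rw [h2]
    nlinarith
  -- `R k → ∞`
  have hRtop : Tendsto (fun k : ℕ => R k) atTop atTop := by
    refine tendsto_atTop_mono' atTop ?_ tendsto_natCast_atTop_atTop
    filter_upwards [hElog, Filter.eventually_ge_atTop 1] with k hk hk1
    have hpos := hRpos k hk1
    have h1 : Real.exp (k:ℝ) ≤ Real.exp (Real.log (R k)) := Real.exp_le_exp.mpr hk
    rw [Real.exp_log hpos] at h1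
    have h2 := Real.add_one_le_exp (k:ℝ)
    linarith
  -- from the hypothesis
  have hE3 : ∀ᶠ k : ℕ in atTop,
      R k ^ (θ / (2 * (m:ℝ))) * Real.log (R k) ^ (2 + aa + θ / (m:ℝ)) * D k ≤ C := by
    filter_upwards [hRtop.eventually hCb] with k hk
    exact hk.trans (le_max_left _ _)
  -- the key per-index estimate
  have key : ∀ᶠ k : ℕ in atTop, c k * (D k + ε k) ≤ (C + 1) / (k:ℝ)^2 := by
    filter_upwards [hE3, hElog, Filter.eventually_ge_atTop 1] with k h3 hlog hk1
    have hk0 : (0:ℝ) < (k:ℝ) := by exact_mod_cast hk1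
    have hRp : 0 < R k := hRpos k hk1
    have hmne : (m:ℝ) ≠ 0 := ne_of_gt hm0
    -- rpow computation for `R k`
    have e1 : R k ^ (θ / (2*(m:ℝ))) = (2:ℝ) ^ ((k:ℝ)*θ) / (k:ℝ) ^ (θ/(m:ℝ)) := by
      simp only [hRdef]
      rw [Real.div_rpow (by positivity) (by positivity)]
      congr 1
      · rw [← Real.rpow_natCast (2:ℝ) (2*k*m), ← Real.rpow_mul (by norm_num : (0:ℝ) ≤ 2)]
        congr 1
        push_cast
        field_simp
      · rw [← Real.rpow_natCast (k:ℝ) 2, ← Real.rpow_mul hk0.le]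
        congr 1
        push_cast
        field_simp
    have e2 : (k:ℝ) ^ (2 + aa + θ/(m:ℝ)) = (k:ℝ)^2 * (k:ℝ)^aa * (k:ℝ)^(θ/(m:ℝ)) := by
      rw [Real.rpow_add hk0, Real.rpow_add hk0]
      rw [show ((2:ℝ)) = ((2:ℕ):ℝ) by norm_num, Real.rpow_natCast]
    have hβ : (k:ℝ) ^ (2 + aa + θ/(m:ℝ)) ≤ Real.log (R k) ^ (2 + aa + θ/(m:ℝ)) := by
      have hβ0 : 0 ≤ 2 + aa + θ/(m:ℝ) := by positivity
      exact Real.rpow_le_rpow hk0.le hlog hβ0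
    have hGF : c k * (k:ℝ)^2 ≤ R k ^ (θ/(2*(m:ℝ))) * Real.log (R k) ^ (2 + aa + θ/(m:ℝ)) := by
      have hne : (k:ℝ)^(θ/(m:ℝ)) ≠ 0 := by positivity
      have heq : c k * (k:ℝ)^2 = R k ^ (θ/(2*(m:ℝ))) * (k:ℝ) ^ (2 + aa + θ/(m:ℝ)) := by
        rw [e1, e2]
        simp only [hcdef]
        field_simp
      rw [heq]
      exact mul_le_mul_of_nonneg_left hβ (Real.rpow_nonneg hRp.le _)
    have hA : c k * (k:ℝ)^2 * D k ≤ C :=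
      le_trans (mul_le_mul_of_nonneg_right hGF (hD0 k)) h3
    have h1 : c k * D k ≤ C / (k:ℝ)^2 := by
      rw [le_div_iff₀ (by positivity)]
      calc c k * D k * (k:ℝ)^2 = c k * (k:ℝ)^2 * D k := by ring
        _ ≤ C := hA
    have h2 : c k * ε k = ((k:ℝ)^2)⁻¹ := by
      have hcne : c k ≠ 0 := ne_of_gt (hcpos k hk1)
      simp only [hεdef]
      rw [mul_inv, ← mul_assoc, mul_inv_cancel₀ hcne, one_mul]
    calc c k * (D k + ε k) = c k * D k + c k * ε k := by ring
      _ ≤ C / (k:ℝ)^2 + ((k:ℝ)^2)⁻¹ := add_le_add h1 (le_of_eq h2)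
      _ = (C+1) / (k:ℝ)^2 := by
          rw [inv_eq_one_div]
          ring
  obtain ⟨N₀, hN₀⟩ := Filter.eventually_atTop.mp key
  set N : ℕ := max N₀ 1 with hNdef
  -- choose the approximating sequence
  have hex : ∀ k : ℕ, 1 ≤ k → ∃ v : X, ‖v‖ ≤ R k ∧ ‖y - J v‖ ≤ D k + ε k := by
    intro k hk
    have hRp := hRpos k hk
    have hεp := hεpos k hk
    have hSne : Set.Nonempty {r : ℝ | ∃ x : X, ‖x‖ ≤ R k ∧ r = ‖y - J x‖} :=
      ⟨‖y - J 0‖, 0, by simpa using hRp.le, rfl⟩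
    obtain ⟨r, ⟨v, hv, rfl⟩, hlt⟩ := Real.lt_sInf_add_pos hSne hεp
    exact ⟨v, hv, hlt.le⟩
  choose v hv1 hv2 using hex
  set x : ℕ → X := fun k => if h : 1 ≤ k then v k h else 0 with hxdef
  have hx1 : ∀ k, 1 ≤ k → ‖x k‖ ≤ R k := by
    intro k h
    simp only [hxdef, dif_pos h]
    exact hv1 k h
  have hx2 : ∀ k, 1 ≤ k → ‖y - J (x k)‖ ≤ D k + ε k := by
    intro k h
    simp only [hxdef, dif_pos h]
    exact hv2 k h
  refine ⟨x, ?_⟩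
  set f : ℕ → ℝ≥0∞ := fun n =>
    ENNReal.ofReal ((2:ℝ) ^ (((n:ℝ) + 1) * θ) * ((n:ℝ) + 1) ^ aa) *
        ENNReal.ofReal ‖y - J (x (n+1))‖
      + ((2:ℝ≥0∞) ^ (2 * (n+1) * m))⁻¹ * ENNReal.ofReal ‖x (n+1)‖ with hfdef
  have hgoal : piAb (⇑J) θ aa m y x = ∑' n, f n := rfl
  rw [hgoal]
  set g : ℕ → ℝ≥0∞ := fun n => ENNReal.ofReal ((C+2)/((n:ℝ)+1)^2) with hgdef
  -- each term is finite
  have hfne : ∀ n : ℕ, f n ≠ ⊤ := by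
    intro n
    simp only [hfdef]
    exact ENNReal.add_ne_top.mpr ⟨ENNReal.mul_ne_top ENNReal.ofReal_ne_top
      ENNReal.ofReal_ne_top, ENNReal.mul_ne_top
        (ENNReal.inv_ne_top.mpr (pow_ne_zero _ (by norm_num))) ENNReal.ofReal_ne_top⟩
  -- tail bound
  have htail : ∀ n : ℕ, N ≤ n + 1 → f n ≤ g n := by
    intro n hn
    set k : ℕ := n + 1 with hkdef
    have hk1 : 1 ≤ k := by omega
    have hk0 : (0:ℝ) < (k:ℝ) := by exact_mod_cast hk1
    have hkN : N₀ ≤ k := le_trans (le_max_left _ 1) hn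
    have hkey : c k * (D k + ε k) ≤ (C+1) / (k:ℝ)^2 := hN₀ k hkN
    have hcast : ((n:ℝ)) + 1 = (k:ℝ) := by push_cast [hkdef]; ring
    have hpow : (2:ℝ≥0∞) ^ (2*k*m) = ENNReal.ofReal ((2:ℝ) ^ (2*k*m)) := by
      rw [ENNReal.ofReal_pow (by norm_num)]
      norm_num
    have hterm1 : ENNReal.ofReal ((2:ℝ) ^ ((k:ℝ)*θ) * (k:ℝ) ^ aa) *
        ENNReal.ofReal ‖y - J (x k)‖ ≤ ENNReal.ofReal ((C+1)/(k:ℝ)^2) := by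
      rw [← ENNReal.ofReal_mul (le_of_lt (hcpos k hk1))]
      refine ENNReal.ofReal_le_ofReal ?_
      exact le_trans (mul_le_mul_of_nonneg_left (hx2 k hk1) (le_of_lt (hcpos k hk1))) hkey
    have hterm2 : ((2:ℝ≥0∞) ^ (2*k*m))⁻¹ * ENNReal.ofReal ‖x k‖ ≤
        ENNReal.ofReal (1/(k:ℝ)^2) := by
      rw [hpow, ← ENNReal.ofReal_inv_of_pos (by positivity),
        ← ENNReal.ofReal_mul (by positivity)]
      refine ENNReal.ofReal_le_ofReal ?_
      have hxk := hx1 k hk1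
      have hb : ((2:ℝ) ^ (2*k*m))⁻¹ * ‖x k‖ ≤ ((2:ℝ) ^ (2*k*m))⁻¹ * R k :=
        mul_le_mul_of_nonneg_left hxk (by positivity)
      refine hb.trans (le_of_eq ?_)
      simp only [hRdef]
      field_simp
    simp only [hfdef, hgdef]
    rw [hcast]
    calc ENNReal.ofReal ((2:ℝ) ^ ((k:ℝ)*θ) * (k:ℝ) ^ aa) * ENNReal.ofReal ‖y - J (x k)‖
          + ((2:ℝ≥0∞) ^ (2*k*m))⁻¹ * ENNReal.ofReal ‖x k‖
        ≤ ENNReal.ofReal ((C+1)/(k:ℝ)^2) + ENNReal.ofReal (1/(k:ℝ)^2) :=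
          add_le_add hterm1 hterm2
      _ = ENNReal.ofReal ((C+1)/(k:ℝ)^2 + 1/(k:ℝ)^2) :=
          (ENNReal.ofReal_add (by positivity) (by positivity)).symm
      _ = ENNReal.ofReal ((C+2)/(k:ℝ)^2) := by
          congr 1
          ring
  -- compare with an indicator split
  have hcmp : ∀ n : ℕ, f n ≤ (if n + 1 < N then f n else 0) + g n := by
    intro n
    by_cases h : n + 1 < N
    · rw [if_pos h]
      exact le_add_right le_rfl
    · rw [if_neg h, zero_add]
      exact htail n (by omega)
  have hsum : Summable (fun n : ℕ => (C+2)/((n:ℝ)+1)^2) := by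
    have h0 : Summable (fun n : ℕ => 1 / (n:ℝ)^2) :=
      Real.summable_one_div_nat_pow.mpr one_lt_two
    have h1 : Summable (fun n : ℕ => 1 / ((n+1:ℕ):ℝ)^2) :=
      (summable_nat_add_iff 1).mpr h0
    refine (h1.mul_left (C+2)).congr ?_
    intro n
    push_cast
    ring
  have hg : ∑' n, g n ≠ ⊤ := by
    simp only [hgdef]
    rw [← ENNReal.ofReal_tsum_of_nonneg (fun i => by positivity) hsum]
    exact ENNReal.ofReal_ne_top
  have hhead : (∑' n, if n + 1 < N then f n else 0) ≠ ⊤ := by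
    rw [tsum_eq_sum (s := Finset.range N)
      (fun b hb => if_neg (by simp only [Finset.mem_range, not_lt] at hb; omega))]
    refine (ENNReal.sum_lt_top.mpr ?_).ne
    intro i _
    split
    · exact (hfne i).lt_top
    · exact ENNReal.zero_lt_top
  have hle : ∑' n, f n ≤ (∑' n, if n + 1 < N then f n else 0) + ∑' n, g n :=
    le_trans (ENNReal.tsum_le_tsum hcmp) (le_of_eq ENNReal.tsum_add)
  exact ne_top_of_le_ne_top (ENNReal.add_ne_top.mpr ⟨hhead, hg⟩) hle
end

section
/- Let X ⊂ Y be normed spaces, e ∈ 𝓔, θ ≥ 0, m ∈ ℕ*, and suppose y ∈ Y satisfies hypothesis H(θ,m,e): there exists a > 1 such that limsup_{R→∞} (1/R) L_a(R)^{1+θ/(2m)} β_e(L_a(R)^{d/(2m)}) d_Y(y, B_X(R)) < ∞, where L_a(R) = R(ln R)^a. Then one may find a sequence x_n ∈ X such that Σ_{n=1}^∞ [2^{nθ} β_e(2^{nd}) ‖y−x_n‖_Y + 2^{−2nm} ‖x_n‖_X] < ∞. -/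
open MeasureTheory ENNReal Filter

/-!
Take radii `R_k = 2^{2km} / k^s` with `1 < s < a`. Since `ln R_k ≥ k` eventually,
`L_a(R_k) ≥ R_k k^s = 2^{2km}`, and as `L ↦ L^{1+θ/(2m)} β_e(L^{d/(2m)})` is monotone (because
`e(c)/c` is), hypothesis `H(θ,m,e)` at `R = R_k` gives
`2^{kθ} β_e(2^{kd}) d_Y(y, B_X(R_k)) ≤ C k^{-s}`. Picking `x_k ∈ B_X(R_k)` nearly realizing this
distance makes both terms of the series `O(k^{-s})`, the second one being `2^{-2km} R_k = k^{-s}`.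
-/

namespace IsYoungE

variable {e : ℝ → ℝ}

theorem continuous (he : IsYoungE e) : Continuous e :=
  continuousOn_univ.mp (he.strictConvexOn.convexOn.continuousOn isOpen_univ)

theorem apply_one_pos (he : IsYoungE e) : 0 < e 1 := by
  have h := he.strictConvexOn.2 (Set.mem_univ 0) (Set.mem_univ 1) zero_ne_one
    (by norm_num : (0 : ℝ) < 1 / 2) (by norm_num : (0 : ℝ) < 1 / 2) (by norm_num)
  simp only [smul_eq_mul, he.zero] at h
  linarith [he.nonneg (1 / 2 * 0 + 1 / 2 * 1)]

theorem mul_apply_one_le (he : IsYoungE e) {c : ℝ} (hc : 1 ≤ c) : c * e 1 ≤ e c := by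
  have h := he.ratio_mono 1 c one_pos hc
  rwa [div_one, le_div_iff₀ (by linarith), mul_comm] at h

theorem le_mul_apply_one (he : IsYoungE e) {c : ℝ} (h0 : 0 < c) (hc : c ≤ 1) :
    e c ≤ c * e 1 := by
  have h := he.ratio_mono c 1 h0 hc
  rwa [div_one, div_le_iff₀ h0, mul_comm] at h

theorem bddAbove_setOf_le (he : IsYoungE e) (R : ℝ) : BddAbove {c | e c ≤ R} := by
  refine ⟨max 1 (R / e 1), fun c (hc : e c ≤ R) => ?_⟩
  rcases le_or_gt c 1 with h | h
  · exact le_max_of_le_left h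
  · refine le_max_of_le_right ((le_div_iff₀ he.apply_one_pos).mpr ?_)
    exact (he.mul_apply_one_le h.le).trans hc

theorem einv_nonneg (he : IsYoungE e) {R : ℝ} (hR : 0 ≤ R) : 0 ≤ einv e R :=
  le_csSup (he.bddAbove_setOf_le R) (by simpa [he.zero] using hR)

theorem einv_pos (he : IsYoungE e) {R : ℝ} (hR : 0 < R) : 0 < einv e R := by
  set c := min 1 (R / e 1)
  have hc : 0 < c := lt_min one_pos (div_pos hR he.apply_one_pos)
  have hcR : e c ≤ R := by
    refine (he.le_mul_apply_one hc (min_le_left _ _)).trans ?_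
    exact (le_div_iff₀ he.apply_one_pos).mp (min_le_right _ _)
  exact hc.trans_le (le_csSup (he.bddAbove_setOf_le R) hcR)

theorem apply_einv (he : IsYoungE e) {R : ℝ} (hR : 0 ≤ R) : e (einv e R) = R := by
  have hbdd := he.bddAbove_setOf_le R
  have hle : e (einv e R) ≤ R :=
    (isClosed_le he.continuous continuous_const).csSup_mem ⟨0, by simpa [he.zero] using hR⟩ hbdd
  refine hle.antisymm (not_lt.mp fun hlt => ?_)
  -- `e < R` near `einv e R`, so the set `{c | e c ≤ R}` reaches beyond its supremum
  obtain ⟨c, hcR, hc⟩ := (((he.continuous.tendsto _).eventually (gt_mem_nhds hlt)).filter_mono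
    nhdsWithin_le_nhds |>.and (self_mem_nhdsWithin (s := Set.Ioi (einv e R)))).exists
  exact (not_le.mpr (Set.mem_Ioi.mp hc)) (le_csSup hbdd (le_of_lt hcR))

theorem einv_mono (he : IsYoungE e) {R R' : ℝ} (hR : 0 ≤ R) (h : R ≤ R') :
    einv e R ≤ einv e R' :=
  csSup_le_csSup (he.bddAbove_setOf_le R') ⟨0, by simpa [he.zero] using hR⟩
    fun _ hc => le_trans hc h

theorem betaE_nonneg (he : IsYoungE e) {R : ℝ} (hR : 0 ≤ R) : 0 ≤ betaE e R :=
  div_nonneg hR (he.einv_nonneg hR)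

theorem betaE_mono (he : IsYoungE e) {R R' : ℝ} (hR : 0 < R) (h : R ≤ R') :
    betaE e R ≤ betaE e R' := by
  have hmono := he.ratio_mono _ _ (he.einv_pos hR) (he.einv_mono hR.le h)
  rwa [he.apply_einv hR.le, he.apply_einv (hR.le.trans h)] at hmono

theorem rpow_mul_betaE_rpow_mono (he : IsYoungE e) {p q t L : ℝ} (hp : 0 ≤ p) (hq : 0 ≤ q)
    (ht : 0 < t) (h : t ≤ L) :
    t ^ p * betaE e (t ^ q) ≤ L ^ p * betaE e (L ^ q) :=
  mul_le_mul (Real.rpow_le_rpow ht.le h hp)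
    (he.betaE_mono (Real.rpow_pos_of_pos ht q) (Real.rpow_le_rpow ht.le h hq))
    (he.betaE_nonneg (Real.rpow_nonneg ht.le q)) (Real.rpow_nonneg (ht.le.trans h) p)

end IsYoungE

section Approximation

variable {X Y : Type*} [NormedAddCommGroup X] [NormedAddCommGroup Y] (J : X → Y) (y : Y)

theorem dYball_nonneg (R : ℝ) : 0 ≤ dYball J y R :=
  Real.sInf_nonneg (by rintro r ⟨x, -, rfl⟩; exact norm_nonneg _)

theorem exists_norm_le_and_lt_dYball_add {R ε : ℝ} (hR : 0 ≤ R) (hε : 0 < ε) :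
    ∃ x : X, ‖x‖ ≤ R ∧ ‖y - J x‖ < dYball J y R + ε := by
  have hne : {r : ℝ | ∃ x : X, ‖x‖ ≤ R ∧ r = ‖y - J x‖}.Nonempty :=
    ⟨_, 0, by simpa using hR, rfl⟩
  have hbdd : BddBelow {r : ℝ | ∃ x : X, ‖x‖ ≤ R ∧ r = ‖y - J x‖} :=
    ⟨0, by rintro r ⟨x, -, rfl⟩; exact norm_nonneg _⟩
  obtain ⟨_, ⟨x, hx, rfl⟩, hlt⟩ := (csInf_lt_iff hbdd hne).mp (lt_add_of_pos_right _ hε)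
  exact ⟨x, hx, hlt⟩

theorem exists_summable_of_summable_dYball {B c R : ℕ → ℝ} (hB : ∀ k, 0 ≤ B k)
    (hc : ∀ k, 0 ≤ c k) (hR : ∀ k, 0 ≤ R k)
    (hBd : Summable fun k => B k * dYball J y (R k)) (hcR : Summable fun k => c k * R k) :
    ∃ x : ℕ → X, Summable fun k => B k * ‖y - J (x k)‖ + c k * ‖x k‖ := by
  have hε : ∀ k, 0 < (1 / 2) ^ k / (B k + 1) := fun k =>
    div_pos (by positivity) (by linarith [hB k])
  choose x hxR hxd using fun k => exists_norm_le_and_lt_dYball_add J y (hR k) (hε k)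
  refine ⟨x, .of_nonneg_of_le (fun k => by have := hB k; have := hc k; positivity) (fun k => ?_)
    ((hBd.add summable_geometric_two).add hcR)⟩
  have hBε : B k * ((1 / 2) ^ k / (B k + 1)) ≤ (1 / 2) ^ k := by
    rw [mul_div_assoc', div_le_iff₀ (by linarith [hB k])]
    nlinarith [hB k, pow_nonneg (by norm_num : (0 : ℝ) ≤ 1 / 2) k]
  have := mul_le_mul_of_nonneg_left (hxd k).le (hB k)
  have := mul_le_mul_of_nonneg_left (hxR k) (hc k)
  linarith

end Approximation

theorem eventually_le_log_two_pow_div_rpow {m : ℕ} (hm : 1 ≤ m) {s : ℝ} (hs : 0 < s) :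
    ∀ᶠ k : ℕ in atTop, (k : ℝ) ≤ Real.log (2 ^ (2 * k * m) / (k : ℝ) ^ s) := by
  -- the logarithm is `≥ 2k log 2 - s log k`, and `s log k = o(k)` while `2 log 2 > 1`
  have hc : 0 < (2 * Real.log 2 - 1) / s := div_pos (by linarith [Real.log_two_gt_d9]) hs
  filter_upwards [tendsto_natCast_atTop_atTop.eventually (Real.isLittleO_log_id_atTop.bound hc),
    eventually_ge_atTop 1] with k hlog hk
  have hk' : (1 : ℝ) ≤ k := by exact_mod_cast hk
  rw [Real.norm_of_nonneg (Real.log_nonneg hk'), id, Real.norm_of_nonneg (by linarith)] at hlog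
  have hslog : s * Real.log k ≤ (2 * Real.log 2 - 1) * k :=
    calc s * Real.log k ≤ s * ((2 * Real.log 2 - 1) / s * k) :=
          mul_le_mul_of_nonneg_left hlog hs.le
      _ = (2 * Real.log 2 - 1) * k := by field_simp
  have hm' : (0 : ℝ) ≤ m - 1 := by
    have : (1 : ℝ) ≤ m := by exact_mod_cast hm
    linarith
  rw [Real.log_div (by positivity) (by positivity), Real.log_pow, Real.log_rpow (by linarith)]
  push_cast
  nlinarith [mul_nonneg (mul_nonneg (by linarith : (0 : ℝ) ≤ k) hm') (Real.log_pos one_lt_two).le]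

theorem tendsto_two_pow_div_rpow_atTop {m : ℕ} (hm : 1 ≤ m) {s : ℝ} (hs : 0 < s) :
    Tendsto (fun k : ℕ => (2 : ℝ) ^ (2 * k * m) / (k : ℝ) ^ s) atTop atTop := by
  refine tendsto_atTop_mono' atTop ?_ tendsto_natCast_atTop_atTop
  filter_upwards [eventually_le_log_two_pow_div_rpow hm hs] with k hk
  exact hk.trans (Real.log_le_self (by positivity))

theorem eventually_two_pow_le_La {m : ℕ} (hm : 1 ≤ m) {a s : ℝ} (hs : 0 < s) (hsa : s ≤ a) :
    ∀ᶠ k : ℕ in atTop, (2 : ℝ) ^ (2 * k * m) ≤ La a (2 ^ (2 * k * m) / (k : ℝ) ^ s) := by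
  filter_upwards [eventually_le_log_two_pow_div_rpow hm hs, eventually_ge_atTop 1] with k hlog hk
  have hk' : (1 : ℝ) ≤ k := by exact_mod_cast hk
  have hks : 0 < (k : ℝ) ^ s := Real.rpow_pos_of_pos (by linarith) s
  calc (2 : ℝ) ^ (2 * k * m) = 2 ^ (2 * k * m) / (k : ℝ) ^ s * (k : ℝ) ^ s := by field_simp
    _ ≤ 2 ^ (2 * k * m) / (k : ℝ) ^ s * Real.log (2 ^ (2 * k * m) / (k : ℝ) ^ s) ^ a := by
      gcongr
      exact (Real.rpow_le_rpow_of_exponent_le hk' hsa).trans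
        (Real.rpow_le_rpow (by linarith) hlog (by linarith))

theorem eventually_mul_dYball_le_div_rpow {X Y : Type*} [NormedAddCommGroup X]
    [NormedAddCommGroup Y] {J : X → Y} {y : Y} {e : ℝ → ℝ} (he : IsYoungE e) {θ : ℝ}
    (hθ : 0 ≤ θ) {m : ℕ} (hm : 1 ≤ m)
    (d : ℕ) {a s Cb : ℝ} (hs : 0 < s) (hsa : s ≤ a)
    (hH : ∀ᶠ R in atTop, La a R ^ (1 + θ / (2 * m)) * betaE e (La a R ^ ((d : ℝ) / (2 * m))) / R *
      dYball J y R ≤ Cb) :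
    ∀ᶠ k : ℕ in atTop, 2 ^ ((k : ℝ) * θ) * betaE e (2 ^ (k * d)) *
      dYball J y (2 ^ (2 * k * m) / (k : ℝ) ^ s) ≤ Cb / (k : ℝ) ^ s := by
  filter_upwards [(tendsto_two_pow_div_rpow_atTop hm hs).eventually hH,
    eventually_two_pow_le_La hm hs hsa, eventually_ge_atTop 1] with k hHk hLa hk
  set t : ℝ := 2 ^ (2 * k * m)
  set R := t / (k : ℝ) ^ s
  set L := La a R
  have hm0 : (2 * m : ℝ) ≠ 0 := by positivity
  have ht : 0 < t := by positivity
  have hks : 0 < (k : ℝ) ^ s := Real.rpow_pos_of_pos (by exact_mod_cast hk) s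
  have ht_rpow (r : ℝ) : t ^ (r / (2 * m)) = 2 ^ ((k : ℝ) * r) := by
    rw [show t = 2 ^ ((2 * k * m : ℕ) : ℝ) from (Real.rpow_natCast 2 _).symm,
      ← Real.rpow_mul zero_le_two]
    congr 1
    push_cast
    field_simp
  have hweight : t * (2 ^ ((k : ℝ) * θ) * betaE e (2 ^ (k * d))) ≤
      L ^ (1 + θ / (2 * m)) * betaE e (L ^ ((d : ℝ) / (2 * m))) := by
    have hmono := he.rpow_mul_betaE_rpow_mono (p := 1 + θ / (2 * m)) (q := (d : ℝ) / (2 * m))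
      (by positivity) (by positivity) ht hLa
    rwa [Real.rpow_add ht, Real.rpow_one, ht_rpow, ht_rpow, ← Nat.cast_mul, Real.rpow_natCast,
      mul_assoc] at hmono
  rw [div_mul_eq_mul_div, div_le_iff₀ (div_pos ht hks)] at hHk
  rw [le_div_iff₀ hks]
  refine le_of_mul_le_mul_left ?_ ht
  calc t * (2 ^ ((k : ℝ) * θ) * betaE e (2 ^ (k * d)) * dYball J y R * (k : ℝ) ^ s)
      = t * (2 ^ ((k : ℝ) * θ) * betaE e (2 ^ (k * d))) * dYball J y R * (k : ℝ) ^ s := by ring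
    _ ≤ L ^ (1 + θ / (2 * m)) * betaE e (L ^ ((d : ℝ) / (2 * m))) * dYball J y R *
        (k : ℝ) ^ s := by
      gcongr
      exact dYball_nonneg J y R
    _ ≤ Cb * R * (k : ℝ) ^ s := by gcongr
    _ = t * Cb := by rw [mul_assoc, div_mul_cancel₀ _ hks.ne', mul_comm]

theorem tsum_ofReal_mul_add_inv_two_pow_ne_top {A u v : ℕ → ℝ} (j : ℕ → ℕ)
    (hA : ∀ n, 0 ≤ A n) (hu : ∀ n, 0 ≤ u n) (hv : ∀ n, 0 ≤ v n)
    (h : Summable fun n => A n * u n + ((2 : ℝ) ^ j n)⁻¹ * v n) :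
    ∑' n, (ENNReal.ofReal (A n) * ENNReal.ofReal (u n) +
      ((2 : ℝ≥0∞) ^ j n)⁻¹ * ENNReal.ofReal (v n)) ≠ ∞ := by
  have hterm (n : ℕ) : ENNReal.ofReal (A n) * ENNReal.ofReal (u n) +
      ((2 : ℝ≥0∞) ^ j n)⁻¹ * ENNReal.ofReal (v n) =
      ENNReal.ofReal (A n * u n + ((2 : ℝ) ^ j n)⁻¹ * v n) := by
    rw [ENNReal.ofReal_add (mul_nonneg (hA n) (hu n)) (by have := hv n; positivity),
      ENNReal.ofReal_mul (hA n), ENNReal.ofReal_mul (by positivity), ENNReal.ofReal_inv_of_pos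
      (by positivity), ENNReal.ofReal_pow zero_le_two, ENNReal.ofReal_ofNat]
  have hnonneg (n : ℕ) : 0 ≤ A n * u n + ((2 : ℝ) ^ j n)⁻¹ * v n := by
    have := hA n; have := hu n; have := hv n; positivity
  simp_rw [hterm]
  rw [← ENNReal.ofReal_tsum_of_nonneg hnonneg h]
  exact ENNReal.ofReal_ne_top

theorem stmt16_general {X Y : Type*} [NormedAddCommGroup X] [NormedAddCommGroup Y]
    [NormedSpace ℝ X] [NormedSpace ℝ Y]
    (J : X →ₗ[ℝ] Y)
    (e : ℝ → ℝ) (he : IsYoungE e) (θ : ℝ) (hθ : 0 ≤ θ) (m : ℕ) (hm : 1 ≤ m)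
    (d : ℕ)
    (y : Y)
    (hy : ∃ a : ℝ, 1 < a ∧ ∃ Cb : ℝ, ∀ᶠ R in atTop,
      La a R ^ (1 + θ / (2 * m)) * betaE e (La a R ^ ((d : ℝ) / (2 * m))) / R *
        dYball J y R ≤ Cb) :
    ∃ x : ℕ → X,
      (∑' n : ℕ,
        (ENNReal.ofReal ((2 : ℝ) ^ (((n : ℝ) + 1) * θ) * betaE e ((2 : ℝ) ^ ((n + 1) * d))) *
            ENNReal.ofReal ‖y - J (x (n + 1))‖
          + ((2 : ℝ≥0∞) ^ (2 * (n + 1) * m))⁻¹ * ENNReal.ofReal ‖x (n + 1)‖)) ≠ ∞ := by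
  obtain ⟨a, ha, Cb, hH⟩ := hy
  obtain ⟨s, hs, hsa⟩ := exists_between ha
  set B : ℕ → ℝ := fun k => 2 ^ ((k : ℝ) * θ) * betaE e (2 ^ (k * d))
  have hB (k : ℕ) : 0 ≤ B k := mul_nonneg (by positivity) (he.betaE_nonneg (by positivity))
  have hps : Summable fun k : ℕ => 1 / (k : ℝ) ^ s := Real.summable_one_div_nat_rpow.mpr hs
  have hBd : Summable fun k : ℕ => B k * dYball J y (2 ^ (2 * k * m) / (k : ℝ) ^ s) := by
    refine (hps.mul_left Cb).of_norm_bounded_eventually_nat ?_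
    filter_upwards [eventually_mul_dYball_le_div_rpow he hθ hm d (zero_lt_one.trans hs) hsa.le hH]
      with k hk
    rw [Real.norm_of_nonneg (mul_nonneg (hB k) (dYball_nonneg _ _ _)), mul_one_div]
    exact hk
  have hcR : Summable fun k : ℕ => ((2 : ℝ) ^ (2 * k * m))⁻¹ * (2 ^ (2 * k * m) / (k : ℝ) ^ s) :=
    hps.congr fun k => by rw [inv_mul_eq_div, div_div_cancel_left' (by positivity), one_div]
  obtain ⟨x, hx⟩ := exists_summable_of_summable_dYball J y hB (fun k => by positivity)
    (fun k => by positivity) hBd hcR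
  refine ⟨x, tsum_ofReal_mul_add_inv_two_pow_ne_top _ (fun n => ?_) (fun _ => norm_nonneg _)
    (fun _ => norm_nonneg _) ?_⟩
  · simpa only [B, Nat.cast_succ] using hB (n + 1)
  · simpa only [B, Nat.cast_succ] using (summable_nat_add_iff 1).mpr hx

/-- Lemma 6.7: if `y ∈ Y` satisfies hypothesis `H(θ,m,e)` (there is `a > 1`
with `limsup_{R→∞} (1/R) L_a(R)^{1+θ/(2m)} β_e(L_a(R)^{d/(2m)}) d_Y(y,B_X(R)) < ∞`), then
one may find a sequence `x_n ∈ X` with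
`Σ_{n=1}^∞ [2^{nθ} β_e(2^{nd}) ‖y−x_n‖_Y + 2^{−2nm}‖x_n‖_X] < ∞`. -/
theorem stmt16 {X Y : Type*} [NormedAddCommGroup X] [NormedAddCommGroup Y]
    [NormedSpace ℝ X] [NormedSpace ℝ Y]
    (J : X →ₗ[ℝ] Y) (hJ : ∃ c : ℝ, ∀ x, ‖J x‖ ≤ c * ‖x‖)
    (e : ℝ → ℝ) (he : IsYoungE e) (θ : ℝ) (hθ : 0 ≤ θ) (m : ℕ) (hm : 1 ≤ m)
    (d : ℕ) (hd : 0 < d)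
    (y : Y)
    (hy : ∃ a : ℝ, 1 < a ∧ ∃ Cb : ℝ, ∀ᶠ R in atTop,
      La a R ^ (1 + θ / (2 * m)) * betaE e (La a R ^ ((d : ℝ) / (2 * m))) / R *
        dYball J y R ≤ Cb) :
    ∃ x : ℕ → X,
      (∑' n : ℕ,
        (ENNReal.ofReal ((2 : ℝ) ^ (((n : ℝ) + 1) * θ) * betaE e ((2 : ℝ) ^ ((n + 1) * d))) *
            ENNReal.ofReal ‖y - J (x (n + 1))‖
          + ((2 : ℝ≥0∞) ^ (2 * (n + 1) * m))⁻¹ * ENNReal.ofReal ‖x (n + 1)‖)) ≠ ∞ :=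
  stmt16_general J e he θ hθ m hm d y hy
end
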